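/- arXiv:1810.01707 — 4 statements merged into one kernel-verified Lean document; each statement's English description precedes it below -/
import Mathlib

section
/- For all integers r ≥ 3 there exists N such that for all n ≥ N the following holds: for X = {2} ⊆ [n], the family AHM_3 is optimal for X, and moreover AHM_3 is the unique MLCIF in ([n] choose r) that is optimal for X. -/
open Finset

/-- The family of all `r`-element subsets of `[n] = {1, …, n}`. -/
def chooseFam (n r : ℕ) : Finset (Finset ℕ) := (Finset.Icc 1 n).powersetCard r

/-- A family of sets is intersecting if any two members meet. -/
def IntersectingFam (𝒜 : Finset (Finset ℕ)) : Prop :=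
  ∀ A ∈ 𝒜, ∀ B ∈ 𝒜, (A ∩ B).Nonempty

/-- `DomLE B A` : writing the elements in increasing order, the `i`-th element
of `B` is at most the `i`-th element of `A` (and they have the same size). -/
def DomLE (B A : Finset ℕ) : Prop :=
  B.card = A.card ∧
  ∀ (i : ℕ) (hB : i < (B.sort (· ≤ ·)).length) (hA : i < (A.sort (· ≤ ·)).length),
    (B.sort (· ≤ ·)).get ⟨i, hB⟩ ≤ (A.sort (· ≤ ·)).get ⟨i, hA⟩

/-- A family of `r`-subsets of `[n]` is left-compressed if it is downward closed
under the domination order. -/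
def LeftCompressed (n r : ℕ) (𝒜 : Finset (Finset ℕ)) : Prop :=
  ∀ A ∈ 𝒜, ∀ B ∈ chooseFam n r, DomLE B A → B ∈ 𝒜

/-- A left-compressed intersecting family in `([n] choose r)`. -/
def IsLCIF (n r : ℕ) (𝒜 : Finset (Finset ℕ)) : Prop :=
  𝒜 ⊆ chooseFam n r ∧ IntersectingFam 𝒜 ∧ LeftCompressed n r 𝒜

/-- A maximal left-compressed intersecting family. -/
def IsMLCIF (n r : ℕ) (𝒜 : Finset (Finset ℕ)) : Prop :=
  IsLCIF n r 𝒜 ∧ ∀ ℬ : Finset (Finset ℕ), IsLCIF n r ℬ → 𝒜 ⊆ ℬ → ℬ = 𝒜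

/-- The number of members of `𝒜` hitting `X`. -/
def hit (X : Finset ℕ) (𝒜 : Finset (Finset ℕ)) : ℕ :=
  (𝒜.filter fun A => (A ∩ X).Nonempty).card

/-- An MLCIF optimal for `X`: it maximises `hit X` among all MLCIFs. -/
def OptimalMLCIF (n r : ℕ) (X : Finset ℕ) (𝒜 : Finset (Finset ℕ)) : Prop :=
  IsMLCIF n r 𝒜 ∧ ∀ ℬ : Finset (Finset ℕ), IsMLCIF n r ℬ → hit X ℬ ≤ hit X 𝒜

/-- An LCIF optimal for `X` among all LCIFs. -/
def OptimalLCIF (n r : ℕ) (X : Finset ℕ) (𝒜 : Finset (Finset ℕ)) : Prop :=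
  IsLCIF n r 𝒜 ∧ ∀ ℬ : Finset (Finset ℕ), IsLCIF n r ℬ → hit X ℬ ≤ hit X 𝒜

/-- The `t`-adjusted Hilton–Milner family. -/
def AHM (n r t : ℕ) : Finset (Finset ℕ) :=
  (chooseFam n r).filter fun A =>
    (1 ∈ A ∧ (A ∩ Finset.Icc 2 t).Nonempty) ∨ Finset.Icc 2 t ⊆ A

/-- The star: all `r`-subsets of `[n]` containing `1`. -/
def starFam (n r : ℕ) : Finset (Finset ℕ) :=
  (chooseFam n r).filter fun A => 1 ∈ A

/-- `G ⊆ [n]` is a potential generator of `𝒜`: every `A ∈ ([n] choose r)`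
containing `G` lies in `𝒜`. -/
def PotGen (n r : ℕ) (𝒜 : Finset (Finset ℕ)) (G : Finset ℕ) : Prop :=
  G ⊆ Finset.Icc 1 n ∧ ∀ A ∈ chooseFam n r, G ⊆ A → A ∈ 𝒜

open Classical in
/-- The canonical generating family: all inclusion-minimal potential generators. -/
noncomputable def canonGen (n r : ℕ) (𝒜 : Finset (Finset ℕ)) : Finset (Finset ℕ) :=
  (Finset.Icc 1 n).powerset.filter fun G =>
    PotGen n r 𝒜 G ∧ ∀ G' ⊆ G, PotGen n r 𝒜 G' → G' = G

/-- The rank of `𝒜`: the smallest size of a generator. -/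
noncomputable def rankFam (n r : ℕ) (𝒜 : Finset (Finset ℕ)) : ℕ :=
  sInf {k : ℕ | ∃ G ∈ canonGen n r 𝒜, G.card = k}

/-- The family generated by `𝒢` with respect to `n` and `r`. -/
def genFam (n r : ℕ) (𝒢 : Finset (Finset ℕ)) : Finset (Finset ℕ) :=
  (chooseFam n r).filter fun A => ∃ G ∈ 𝒢, G ⊆ A

/-- `𝒜 ∈ I_j`: an MLCIF of rank two whose generators of size two are precisely
`{1,2}, {1,3}, …, {1,j}`. -/
noncomputable def MemI (n r j : ℕ) (𝒜 : Finset (Finset ℕ)) : Prop :=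
  IsMLCIF n r 𝒜 ∧ rankFam n r 𝒜 = 2 ∧
    (canonGen n r 𝒜).filter (fun G => G.card = 2) =
      (Finset.Icc 2 j).image fun i => ({1, i} : Finset ℕ)

/-!
Write `prefixCard A v = #(A ∩ [1, v])`. Then `B ≤ A` in the domination order amounts to
`prefixCard A v ≤ prefixCard B v` for all `v`, and `AHM_3` consists of the `r`-sets with at least
two points in `[3]`; in particular it is intersecting and left-compressed.

An MLCIF `𝒜 ⊆ AHM_3` equals `AHM_3` by maximality. Otherwise `𝒜` contains some `C` with
`|C ∩ [3]| ≤ 1`, and then every `A ∈ 𝒜` avoiding `1` has at least three points in `[2, r + 2]`: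
if not, `prefixCard A v + prefixCard C v ≤ v` for every `v`, which says exactly that the `r`
smallest elements of `[n] \ C` form a set dominated by `A`; that set lies in `𝒜` and misses `C`.
So the members of `𝒜` through `2` contain `{1, 2}` or a triple of `[2, r + 2]`: there are at most
`C(n-2, r-2) + C(r+1, 3) C(n-3, r-3)` of them, whereas `AHM_3` has at least
`C(n-2, r-2) + C(n-3, r-2)`, which is larger for `n ≥ (r + 1)^4 + r`.
-/

def prefixCard (A : Finset ℕ) (v : ℕ) : ℕ := #{x ∈ A | x ≤ v}

lemma prefixCard_mono (A : Finset ℕ) {u v : ℕ} (h : u ≤ v) : prefixCard A u ≤ prefixCard A v :=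
  card_le_card fun _ hx => by
    simp only [mem_filter] at hx ⊢
    exact ⟨hx.1, hx.2.trans h⟩

lemma prefixCard_le_card (A : Finset ℕ) (v : ℕ) : prefixCard A v ≤ #A :=
  card_filter_le _ _

lemma prefixCard_le_add_sub (A : Finset ℕ) (u v : ℕ) :
    prefixCard A v ≤ prefixCard A u + (v - u) := by
  have hsub : {x ∈ A | x ≤ v} ⊆ {x ∈ A | x ≤ u} ∪ Icc (u + 1) v := by
    intro x hx
    simp only [mem_filter, mem_union, mem_Icc] at hx ⊢
    exact (le_or_gt x u).imp (fun h => ⟨hx.1, h⟩) (fun h => ⟨h, hx.2⟩)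
  calc prefixCard A v ≤ #({x ∈ A | x ≤ u} ∪ Icc (u + 1) v) := card_le_card hsub
    _ ≤ #{x ∈ A | x ≤ u} + #(Icc (u + 1) v) := card_union_le _ _
    _ = prefixCard A u + (v - u) := by rw [Nat.card_Icc, Nat.add_sub_add_right]; rfl

lemma prefixCard_eq_zero {A : Finset ℕ} {v : ℕ} (h : ∀ x ∈ A, v < x) : prefixCard A v = 0 := by
  rw [prefixCard, card_eq_zero, filter_eq_empty_iff]
  exact fun x hx => not_le.mpr (h x hx)

lemma prefixCard_eq_card {A : Finset ℕ} {v : ℕ} (h : ∀ x ∈ A, x ≤ v) : prefixCard A v = #A := by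
  rw [prefixCard, filter_true_of_mem h]

lemma sort_get_le_iff_lt_prefixCard (A : Finset ℕ) {i : ℕ} (hi : i < (A.sort (· ≤ ·)).length)
    (v : ℕ) : (A.sort (· ≤ ·)).get ⟨i, hi⟩ ≤ v ↔ i < prefixCard A v := by
  set f := A.orderEmbOfFin rfl
  have hi' : i < #A := by simpa using hi
  have hget : (A.sort (· ≤ ·)).get ⟨i, hi⟩ = f ⟨i, hi'⟩ := rfl
  have hcard : prefixCard A v = #{j | f j ≤ v} := by
    calc prefixCard A v = #{x ∈ univ.map f.toEmbedding | x ≤ v} := by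
          rw [map_orderEmbOfFin_univ A rfl]; rfl
      _ = #{j | f j ≤ v} := by rw [filter_map, card_map]; rfl
  rw [hget, hcard]
  suffices ∀ j : Fin #A, f j ≤ v ↔ (j : ℕ) < #{j | f j ≤ v} from this ⟨i, hi'⟩
  intro j
  constructor
  · intro hj
    calc (j : ℕ) < #(Iic j) := by simp
      _ ≤ #{j | f j ≤ v} := card_le_card fun x hx =>
          mem_filter.mpr ⟨mem_univ x, (f.monotone (mem_Iic.mp hx)).trans hj⟩
  · intro hj
    by_contra! hvj
    have : #{j | f j ≤ v} ≤ #(Iio j) := card_le_card fun x hx =>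
      mem_Iio.mpr (f.lt_iff_lt.mp ((mem_filter.mp hx).2.trans_lt hvj))
    simp at this
    omega

lemma domLE_iff_prefixCard {B A : Finset ℕ} :
    DomLE B A ↔ #B = #A ∧ ∀ v, prefixCard A v ≤ prefixCard B v := by
  refine and_congr_right fun hcard => ⟨fun hdom v => ?_, fun hpc i hB hA => ?_⟩
  · by_contra! hlt
    have hA : prefixCard B v < (A.sort (· ≤ ·)).length := by
      simpa using hlt.trans_le (prefixCard_le_card A v)
    have hB : prefixCard B v < (B.sort (· ≤ ·)).length := by simpa [hcard] using hA
    have := (hdom _ hB hA).trans ((sort_get_le_iff_lt_prefixCard A hA v).mpr hlt)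
    exact lt_irrefl _ ((sort_get_le_iff_lt_prefixCard B hB v).mp this)
  · rw [sort_get_le_iff_lt_prefixCard]
    exact ((sort_get_le_iff_lt_prefixCard A hA _).mp le_rfl).trans_le (hpc _)

lemma inter_nonempty_of_lt_prefixCard_add {A C : Finset ℕ} (hA : 0 ∉ A) (hC : 0 ∉ C) {v : ℕ}
    (h : v < prefixCard A v + prefixCard C v) : (A ∩ C).Nonempty := by
  have hsub : ∀ {B : Finset ℕ}, 0 ∉ B → {x ∈ B | x ≤ v} ⊆ Icc 1 v := fun hB x hx => by
    obtain ⟨hxB, hxv⟩ := mem_filter.mp hx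
    exact mem_Icc.mpr ⟨Nat.pos_of_ne_zero (ne_of_mem_of_not_mem hxB hB), hxv⟩
  have hlt : #(Icc 1 v) < #{x ∈ A | x ≤ v} + #{x ∈ C | x ≤ v} := by simpa [prefixCard] using h
  exact (inter_nonempty_of_card_lt_card_add_card (hsub hA) (hsub hC) hlt).mono
    (inter_subset_inter (filter_subset _ _) (filter_subset _ _))

lemma prefixCard_Icc_sdiff_add_prefixCard {n : ℕ} {C : Finset ℕ} (hC : C ⊆ Icc 1 n) {v : ℕ}
    (hv : v ≤ n) : prefixCard (Icc 1 n \ C) v + prefixCard C v = v := by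
  have hW : {x ∈ Icc 1 n \ C | x ≤ v} = Icc 1 v \ C := by
    ext x
    simp only [mem_filter, mem_sdiff, mem_Icc]
    grind
  have hC' : {x ∈ C | x ≤ v} = Icc 1 v ∩ C := by
    ext x
    have hx := @hC x
    simp only [mem_filter, mem_inter, mem_Icc] at hx ⊢
    grind
  rw [prefixCard, prefixCard, hW, hC', card_sdiff_add_card_inter, Nat.card_Icc, Nat.add_sub_cancel]

lemma exists_domLE_disjoint {n r : ℕ} {A C : Finset ℕ} (hA : A ∈ chooseFam n r)
    (hC : C ⊆ Icc 1 n) (h : ∀ v, prefixCard A v + prefixCard C v ≤ v) :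
    ∃ Z ∈ chooseFam n r, DomLE Z A ∧ Disjoint Z C := by
  obtain ⟨hAn, hAr⟩ := mem_powersetCard.mp hA
  set W := Icc 1 n \ C
  have hW : ∀ v ≤ n, prefixCard W v + prefixCard C v = v := fun v hv =>
    prefixCard_Icc_sdiff_add_prefixCard hC hv
  have hAn' : prefixCard A n = r := hAr ▸ prefixCard_eq_card fun x hx => (mem_Icc.mp (hAn hx)).2
  have hWn : r ≤ prefixCard W n := by linarith [h n, hW n le_rfl]
  have hex : ∃ m, r ≤ prefixCard W m := ⟨n, hWn⟩
  set m := Nat.find hex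
  have hmn : m ≤ n := Nat.find_min' hex hWn
  have hWm : prefixCard W m = r := by
    refine le_antisymm ?_ (Nat.find_spec hex)
    rcases hm : m with _ | k
    · exact (prefixCard_eq_zero fun x hx => (mem_Icc.mp (mem_sdiff.mp hx).1).1).trans_le
        (Nat.zero_le r)
    · have hk : ¬ r ≤ prefixCard W k := Nat.find_min hex (by omega)
      have := prefixCard_le_add_sub W k (k + 1)
      omega
  -- `{x ∈ W | x ≤ m}` consists of the `r` smallest elements of `W`
  refine ⟨{x ∈ W | x ≤ m}, mem_powersetCard.mpr ⟨(filter_subset _ _).trans sdiff_subset, hWm⟩,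
    domLE_iff_prefixCard.mpr ⟨hWm.trans hAr.symm, fun v => ?_⟩,
    disjoint_of_subset_left (filter_subset _ _) sdiff_disjoint⟩
  rcases le_or_gt v m with hvm | hmv
  · have hZ : prefixCard {x ∈ W | x ≤ m} v = prefixCard W v := by
      rw [prefixCard, prefixCard, filter_filter]
      congr 1
      exact filter_congr fun x _ => ⟨fun hx => hx.2, fun hx => ⟨hx.trans hvm, hx⟩⟩
    linarith [h v, hW v (hvm.trans hmn)]
  · rw [prefixCard_eq_card (A := {x ∈ W | x ≤ m}) fun x hx => (mem_filter.mp hx).2.trans hmv.le]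
    exact (prefixCard_le_card A v).trans_eq (hAr.trans hWm.symm)

lemma zero_notMem_of_mem_chooseFam {n r : ℕ} {A : Finset ℕ} (hA : A ∈ chooseFam n r) : 0 ∉ A :=
  fun h => by simpa using (mem_powersetCard.mp hA).1 h

lemma mem_AHM_three_iff {n r : ℕ} {A : Finset ℕ} :
    A ∈ AHM n r 3 ↔ A ∈ chooseFam n r ∧ 2 ≤ prefixCard A 3 := by
  refine mem_filter.trans (and_congr_right fun hA => ?_)
  have h0 := zero_notMem_of_mem_chooseFam hA
  have hpc : prefixCard A 3 = #{x ∈ ({1, 2, 3} : Finset ℕ) | x ∈ A} := by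
    rw [prefixCard]
    congr 1
    ext x
    simp only [mem_filter, mem_insert, mem_singleton]
    grind
  have hIcc : Icc 2 3 = ({2, 3} : Finset ℕ) := rfl
  rw [hpc, hIcc]
  by_cases h1 : 1 ∈ A <;> by_cases h2 : 2 ∈ A <;> by_cases h3 : 3 ∈ A <;>
    simp [filter_insert, filter_singleton, h1, h2, h3, insert_subset_iff]

lemma isLCIF_AHM_three (n r : ℕ) : IsLCIF n r (AHM n r 3) := by
  refine ⟨filter_subset _ _, fun A hA B hB => ?_, fun A hA B hB hBA => ?_⟩
  · rw [mem_AHM_three_iff] at hA hB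
    exact inter_nonempty_of_lt_prefixCard_add (zero_notMem_of_mem_chooseFam hA.1)
      (zero_notMem_of_mem_chooseFam hB.1) (v := 3) (by omega)
  · rw [mem_AHM_three_iff] at hA ⊢
    exact ⟨hB, hA.2.trans ((domLE_iff_prefixCard.mp hBA).2 3)⟩

lemma exists_mem_AHM_three_disjoint {n r : ℕ} (hr : 2 ≤ r) (hn : 2 * r + 1 ≤ n) {C : Finset ℕ}
    (hC : C ∈ chooseFam n r) (hC3 : prefixCard C 3 ≤ 1) : ∃ B ∈ AHM n r 3, Disjoint B C := by
  obtain ⟨hCn, hCr⟩ := mem_powersetCard.mp hC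
  set W := Icc 1 n \ C
  have hW : #W = n - r := by rw [card_sdiff_of_subset hCn, Nat.card_Icc, hCr, Nat.add_sub_cancel]
  have hW3 : prefixCard W 3 + prefixCard C 3 = 3 :=
    prefixCard_Icc_sdiff_add_prefixCard hCn (by omega)
  have hsplit : prefixCard W 3 + #{x ∈ W | ¬x ≤ 3} = #W := card_filter_add_card_filter_not _
  obtain ⟨t₁, ht₁, ht₁card⟩ := exists_subset_card_eq (s := {x ∈ W | x ≤ 3}) (n := 2)
    (by change 2 ≤ prefixCard W 3; omega)
  obtain ⟨t₂, ht₂, ht₂card⟩ := exists_subset_card_eq (s := {x ∈ W | ¬x ≤ 3}) (n := r - 2)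
    (by omega)
  have hB : t₁ ∪ t₂ ⊆ W := union_subset (ht₁.trans (filter_subset _ _))
    (ht₂.trans (filter_subset _ _))
  have hdisj : Disjoint t₁ t₂ :=
    disjoint_of_subset_left ht₁ (disjoint_of_subset_right ht₂ (disjoint_filter_filter_not _ _ _))
  refine ⟨t₁ ∪ t₂, mem_AHM_three_iff.mpr ⟨mem_powersetCard.mpr ⟨hB.trans sdiff_subset, ?_⟩, ?_⟩,
    disjoint_of_subset_left hB sdiff_disjoint⟩
  · rw [card_union_of_disjoint hdisj, ht₁card, ht₂card]
    omega
  · calc 2 = #t₁ := ht₁card.symm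
      _ ≤ prefixCard (t₁ ∪ t₂) 3 := card_le_card fun x hx =>
        mem_filter.mpr ⟨mem_union_left _ hx, (mem_filter.mp (ht₁ hx)).2⟩

lemma isMLCIF_AHM_three {n r : ℕ} (hr : 2 ≤ r) (hn : 2 * r + 1 ≤ n) : IsMLCIF n r (AHM n r 3) := by
  refine ⟨isLCIF_AHM_three n r, fun ℬ hℬ hsub => (hsub.antisymm fun C hC => ?_).symm⟩
  by_contra hC'
  have hC3 : prefixCard C 3 ≤ 1 := by
    by_contra! h
    exact hC' (mem_AHM_three_iff.mpr ⟨hℬ.1 hC, h⟩)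
  obtain ⟨B, hB, hBC⟩ := exists_mem_AHM_three_disjoint hr hn (hℬ.1 hC) hC3
  exact not_disjoint_iff_nonempty_inter.mpr (hℬ.2.1 B (hsub hB) C hC) hBC

lemma three_le_prefixCard_of_one_notMem {n r : ℕ} {𝒜 : Finset (Finset ℕ)} (h𝒜 : IsLCIF n r 𝒜)
    {C : Finset ℕ} (hC : C ∈ 𝒜) (hC3 : prefixCard C 3 ≤ 1) {A : Finset ℕ} (hA : A ∈ 𝒜)
    (h1 : 1 ∉ A) : 3 ≤ prefixCard A (r + 2) := by
  by_contra! hlt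
  obtain ⟨hAn, -⟩ := mem_powersetCard.mp (h𝒜.1 hA)
  obtain ⟨hCn, hCr⟩ := mem_powersetCard.mp (h𝒜.1 hC)
  have hA1 : prefixCard A 1 = 0 := prefixCard_eq_zero fun x hx =>
    lt_of_le_of_ne (mem_Icc.mp (hAn hx)).1 (ne_of_mem_of_not_mem hx h1).symm
  have hC0 : prefixCard C 0 = 0 := prefixCard_eq_zero fun x hx => (mem_Icc.mp (hCn hx)).1
  have hsum : ∀ v, prefixCard A v + prefixCard C v ≤ v := by
    intro v
    have hA₁ := prefixCard_le_add_sub A 1 v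
    have hA₂ := prefixCard_le_add_sub A (r + 2) v
    have hC₀ := prefixCard_le_add_sub C 0 v
    have hC₃ := prefixCard_le_add_sub C 3 v
    have hCcard := hCr ▸ prefixCard_le_card C v
    rcases le_total v 3 with hv | hv
    · have := prefixCard_mono C hv
      omega
    rcases le_total v (r + 2) with hv' | hv'
    · have := prefixCard_mono A hv'
      omega
    · omega
  obtain ⟨Z, hZ, hZA, hZC⟩ := exists_domLE_disjoint (h𝒜.1 hA) hCn hsum
  exact not_disjoint_iff_nonempty_inter.mpr (h𝒜.2.1 Z (h𝒜.2.2 A hA Z hZ hZA) C hC) hZC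

lemma card_powersetCard_filter_le_card_inter_le {U S : Finset ℕ} {r k : ℕ} (hS : S ⊆ U)
    (hk : k ≤ r) :
    #{A ∈ U.powersetCard r | k ≤ #(A ∩ S)} ≤ (#S).choose k * (#U - k).choose (r - k) := by
  calc #{A ∈ U.powersetCard r | k ≤ #(A ∩ S)}
      ≤ #((S.powersetCard k).biUnion fun G => {A ∈ U.powersetCard r | G ⊆ A}) :=
        card_le_card fun A hA => by
          obtain ⟨hA, hAS⟩ := mem_filter.mp hA
          obtain ⟨G, hG, hGk⟩ := exists_subset_card_eq hAS
          exact mem_biUnion.mpr ⟨G, mem_powersetCard.mpr ⟨hG.trans inter_subset_right, hGk⟩,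
            mem_filter.mpr ⟨hA, hG.trans inter_subset_left⟩⟩
    _ ≤ ∑ G ∈ S.powersetCard k, #{A ∈ U.powersetCard r | G ⊆ A} := card_biUnion_le
    _ = ∑ G ∈ S.powersetCard k, (#U - k).choose (r - k) := sum_congr rfl fun G hG => by
        obtain ⟨hGS, hGk⟩ := mem_powersetCard.mp hG
        rw [card_filter_powersetCard_subset G U r (hGS.trans hS) (hGk ▸ hk), hGk]
    _ = (#S).choose k * (#U - k).choose (r - k) := by
        rw [sum_const, card_powersetCard, smul_eq_mul]

lemma mul_choose_lt_choose_succ {m k c : ℕ} (h : c * (k + 1) < m - k) :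
    c * m.choose k < m.choose (k + 1) := by
  refine Nat.lt_of_mul_lt_mul_right (a := k + 1) ?_
  calc c * m.choose k * (k + 1) = c * (k + 1) * m.choose k := by ring
    _ < (m - k) * m.choose k := Nat.mul_lt_mul_of_pos_right h (Nat.choose_pos (by omega))
    _ = m.choose (k + 1) * (k + 1) := by rw [Nat.choose_succ_right_eq, mul_comm]

lemma hit_singleton (x : ℕ) (𝒜 : Finset (Finset ℕ)) : hit {x} 𝒜 = #{A ∈ 𝒜 | x ∈ A} := by
  simp only [hit, inter_singleton]
  congr 1
  exact filter_congr fun A _ => by split_ifs <;> simp_all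

lemma card_filter_one_two_subset {n r : ℕ} (hr : 2 ≤ r) (hn : 2 ≤ n) :
    #{A ∈ chooseFam n r | {1, 2} ⊆ A} = (n - 2).choose (r - 2) := by
  rw [chooseFam, card_filter_powersetCard_subset _ _ _ ?_ (by simp; omega)]
  · simp
  · intro x hx
    simp only [mem_insert, mem_singleton, mem_Icc] at hx ⊢
    omega

lemma hit_two_le_of_prefixCard_three_le_one {n r : ℕ} (hr : 3 ≤ r) (hn : r + 2 ≤ n)
    {𝒜 : Finset (Finset ℕ)} (h𝒜 : IsLCIF n r 𝒜) {C : Finset ℕ} (hC : C ∈ 𝒜)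
    (hC3 : prefixCard C 3 ≤ 1) :
    hit {2} 𝒜 ≤ (n - 2).choose (r - 2) + (r + 1).choose 3 * (n - 3).choose (r - 3) := by
  have hsub : {A ∈ 𝒜 | 2 ∈ A} ⊆ {A ∈ chooseFam n r | {1, 2} ⊆ A} ∪
      {A ∈ chooseFam n r | 3 ≤ #(A ∩ Icc 2 (r + 2))} := by
    intro A hA
    obtain ⟨hA, h2⟩ := mem_filter.mp hA
    by_cases h1 : 1 ∈ A
    · exact mem_union_left _
        (mem_filter.mpr ⟨h𝒜.1 hA, insert_subset h1 (singleton_subset_iff.mpr h2)⟩)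
    refine mem_union_right _ (mem_filter.mpr ⟨h𝒜.1 hA,
      (three_le_prefixCard_of_one_notMem h𝒜 hC hC3 hA h1).trans (card_le_card fun x hx => ?_)⟩)
    obtain ⟨hxA, hx⟩ := mem_filter.mp hx
    have hx1 := (mem_Icc.mp ((mem_powersetCard.mp (h𝒜.1 hA)).1 hxA)).1
    exact mem_inter.mpr
      ⟨hxA, mem_Icc.mpr ⟨lt_of_le_of_ne hx1 (ne_of_mem_of_not_mem hxA h1).symm, hx⟩⟩
  have hS : Icc 2 (r + 2) ⊆ Icc 1 n := Icc_subset_Icc (by norm_num) hn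
  have htriples := card_powersetCard_filter_le_card_inter_le hS hr
  simp only [Nat.card_Icc, Nat.reduceSubDiff, add_tsub_cancel_right] at htriples
  calc hit {2} 𝒜 ≤ #({A ∈ chooseFam n r | {1, 2} ⊆ A} ∪
        {A ∈ chooseFam n r | 3 ≤ #(A ∩ Icc 2 (r + 2))}) :=
        (hit_singleton 2 𝒜).trans_le (card_le_card hsub)
    _ ≤ #{A ∈ chooseFam n r | {1, 2} ⊆ A} + #{A ∈ chooseFam n r | 3 ≤ #(A ∩ Icc 2 (r + 2))} :=
      card_union_le _ _
    _ ≤ (n - 2).choose (r - 2) + (r + 1).choose 3 * (n - 3).choose (r - 3) :=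
      add_le_add (card_filter_one_two_subset (by omega) (by omega)).le htriples

lemma le_hit_two_AHM_three {n r : ℕ} (hr : 2 ≤ r) (hn : 3 ≤ n) :
    (n - 2).choose (r - 2) + (n - 3).choose (r - 2) ≤ hit {2} (AHM n r 3) := by
  have h𝒮 := card_filter_one_two_subset hr (by omega : 2 ≤ n)
  have h𝒯 : #{A ∈ (Icc 2 n).powersetCard r | {2, 3} ⊆ A} = (n - 3).choose (r - 2) := by
    rw [card_filter_powersetCard_subset _ _ _ ?_ (by simp; omega)]
    · simp [Nat.sub_sub]
    · intro x hx
      simp only [mem_insert, mem_singleton, mem_Icc] at hx ⊢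
      omega
  set 𝒮 := {A ∈ chooseFam n r | {1, 2} ⊆ A}
  set 𝒯 := {A ∈ (Icc 2 n).powersetCard r | {2, 3} ⊆ A}
  have hIcc : Icc 2 3 = ({2, 3} : Finset ℕ) := rfl
  have hsub : 𝒮 ∪ 𝒯 ⊆ {A ∈ AHM n r 3 | 2 ∈ A} := by
    intro A hA
    rcases mem_union.mp hA with hA | hA
    · obtain ⟨hA, h12⟩ := mem_filter.mp hA
      have h2 : 2 ∈ A := h12 (by simp)
      exact mem_filter.mpr ⟨mem_filter.mpr ⟨hA, Or.inl ⟨h12 (by simp), 2, by simp [h2, hIcc]⟩⟩, h2⟩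
    · obtain ⟨hA, h23⟩ := mem_filter.mp hA
      exact mem_filter.mpr ⟨mem_filter.mpr ⟨powersetCard_mono (Icc_subset_Icc_left one_le_two) hA,
        Or.inr (hIcc ▸ h23)⟩, h23 (by simp)⟩
  have hdisj : Disjoint 𝒮 𝒯 := disjoint_left.mpr fun A hA𝒮 hA𝒯 => by
    have h1 : 1 ∈ A := (mem_filter.mp hA𝒮).2 (by simp)
    simpa using (mem_powersetCard.mp (mem_filter.mp hA𝒯).1).1 h1
  calc (n - 2).choose (r - 2) + (n - 3).choose (r - 2) = #(𝒮 ∪ 𝒯) := by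
        rw [card_union_of_disjoint hdisj, h𝒮, h𝒯]
    _ ≤ #{A ∈ AHM n r 3 | 2 ∈ A} := card_le_card hsub
    _ = hit {2} (AHM n r 3) := (hit_singleton 2 _).symm

lemma choose_mul_choose_lt_choose {n r : ℕ} (hr : 3 ≤ r) (hn : (r + 1) ^ 4 + r ≤ n) :
    (r + 1).choose 3 * (n - 3).choose (r - 3) < (n - 3).choose (r - 2) := by
  have hbound : (r + 1).choose 3 * (r - 3 + 1) < (r + 1) ^ 4 :=
    calc (r + 1).choose 3 * (r - 3 + 1) ≤ (r + 1) ^ 3 * (r - 3 + 1) :=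
          Nat.mul_le_mul_right _ (Nat.choose_le_pow _ _)
      _ < (r + 1) ^ 3 * (r + 1) := Nat.mul_lt_mul_of_pos_left (by omega) (by positivity)
      _ = (r + 1) ^ 4 := by ring
  have := mul_choose_lt_choose_succ (c := (r + 1).choose 3) (m := n - 3)
    (show _ < n - 3 - (r - 3) by omega)
  rwa [show r - 3 + 1 = r - 2 by omega] at this

lemma IsMLCIF.eq_AHM_three_or_hit_two_lt {n r : ℕ} (hr : 3 ≤ r) (hn : (r + 1) ^ 4 + r ≤ n)
    {𝒜 : Finset (Finset ℕ)} (h𝒜 : IsMLCIF n r 𝒜) :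
    𝒜 = AHM n r 3 ∨ hit {2} 𝒜 < hit {2} (AHM n r 3) := by
  by_cases hsub : 𝒜 ⊆ AHM n r 3
  · exact Or.inl (h𝒜.2 _ (isLCIF_AHM_three n r) hsub).symm
  obtain ⟨C, hC, hCAHM⟩ := not_subset.mp hsub
  have hC3 : prefixCard C 3 ≤ 1 := by
    by_contra! h
    exact hCAHM (mem_AHM_three_iff.mpr ⟨h𝒜.1.1 hC, h⟩)
  have hpow : r + 1 ≤ (r + 1) ^ 4 := Nat.le_self_pow (by norm_num) _
  right
  calc hit {2} 𝒜
      ≤ (n - 2).choose (r - 2) + (r + 1).choose 3 * (n - 3).choose (r - 3) :=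
        hit_two_le_of_prefixCard_three_le_one hr (by omega) h𝒜.1 hC hC3
    _ < (n - 2).choose (r - 2) + (n - 3).choose (r - 2) :=
        Nat.add_lt_add_left (choose_mul_choose_lt_choose hr hn) _
    _ ≤ hit {2} (AHM n r 3) := le_hit_two_AHM_three (by omega) (by omega)

/-- For `r ≥ 3` and `n` sufficiently large, for `X = {2}`,
`AHM_3` is optimal for `X`, and it is the unique MLCIF optimal for `X`. -/
theorem stmt0 :
    ∀ r : ℕ, 3 ≤ r → ∃ N : ℕ, ∀ n : ℕ, N ≤ n →
      OptimalMLCIF n r {2} (AHM n r 3) ∧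
      ∀ 𝒜 : Finset (Finset ℕ), OptimalMLCIF n r {2} 𝒜 → 𝒜 = AHM n r 3 := by
  intro r hr
  refine ⟨(r + 1) ^ 4 + r, fun n hn => ?_⟩
  have hAHM : IsMLCIF n r (AHM n r 3) :=
    isMLCIF_AHM_three (by omega) (by linarith [Nat.le_self_pow (by norm_num : 4 ≠ 0) (r + 1)])
  refine ⟨⟨hAHM, fun ℬ hℬ => ?_⟩, fun 𝒜 h𝒜 => ?_⟩
  · rcases hℬ.eq_AHM_three_or_hit_two_lt hr hn with rfl | hlt
    exacts [le_rfl, hlt.le]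
  · exact (h𝒜.1.eq_AHM_three_or_hit_two_lt hr hn).resolve_right (h𝒜.2 _ hAHM).not_gt
end

section
/- For all integers r ≥ 3 there exists N such that for all n ≥ N the following holds: for every nonempty X ⊆ [2,n] such that X ≠ {2}, it is not the case that (|X| = 2 and X ∩ {2,3} ≠ ∅), it is not the case that (|X| = 3 and {2,3} ⊆ X), and X ⊄ [2,r+1], the star 𝒮 is the unique MLCIF in ([n] choose r) that is optimal for X. -/
open Finset

/-!
If an MLCIF `𝒜` is not the star, it has a member `A ∌ 1`. Two members of a left-compressed
intersecting family already meet inside the window `[1, 2r]`, and left-compression lets us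
replace the window part of `A`, of size `k`, by `[2, k + 1]`; hence every member of `𝒜` meets
`[2, k + 1]`. Pushing that window part further down to `[1, k]` shows `k ≥ 2`.

If some such `A` has `k = 2`, every member of `𝒜` missing `1` contains `{2, 3}`, while no star
set avoiding `{2, 3}` lies in `𝒜`; the hypotheses on `X` ensure that `X` has two points outside
`{2, 3}` whenever it meets `{2, 3}`, and then counting the sets that hit `X` on both sides
favours the star for large `n`. Otherwise every member missing `1` has `k ≥ 3`, so there are
`O(n ^ (r - 3))` of them, while the `Ω(n ^ (r - 2))` star sets through a point of `X` beyond
`r + 1` that avoid `[2, k + 1]` are all missing from `𝒜`.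
-/

namespace Nat

lemma four_mul_add_four_lt_two_pow (k : ℕ) : 4 * (k + 4) < 2 ^ (k + 6) :=
  calc 4 * (k + 4) < 4 * 2 ^ (k + 4) := by have := Nat.lt_two_pow_self (n := k + 4); omega
    _ = 2 ^ (k + 6) := by ring

lemma choose_le_choose_of_le_of_two_mul_le {m j j' : ℕ} (hjj : j' ≤ j) (h : 2 * j ≤ m) :
    m.choose j' ≤ m.choose j := by
  induction j, hjj using Nat.le_induction with
  | base => rfl
  | succ j _ ih => exact (ih (by omega)).trans (choose_le_succ_of_lt_half_left (by omega))

lemma mul_choose_lt_choose_succ {m j K : ℕ} (hj : j ≤ m) (h : K * (j + 1) < m - j) :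
    K * m.choose j < m.choose (j + 1) := by
  refine Nat.lt_of_mul_lt_mul_right (a := j + 1) ?_
  rw [choose_succ_right_eq]
  calc K * m.choose j * (j + 1) = m.choose j * (K * (j + 1)) := by ring
    _ < m.choose j * (m - j) := (Nat.mul_lt_mul_left (choose_pos hj)).mpr h

lemma choose_succ_le_two_mul_choose {m j : ℕ} (h : 2 * j ≤ m) :
    (m + 1).choose j ≤ 2 * m.choose j := by
  cases j with
  | zero => simp
  | succ j =>
    have := choose_le_succ_of_lt_half_left (r := j) (n := m) (by omega)
    rw [choose_succ_succ']
    omega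

lemma choose_add_le_two_pow_mul_choose {m j : ℕ} (d : ℕ) (h : 2 * j ≤ m) :
    (m + d).choose j ≤ 2 ^ d * m.choose j := by
  induction d with
  | zero => simp
  | succ d ih =>
    calc (m + d + 1).choose j ≤ 2 * (m + d).choose j := choose_succ_le_two_mul_choose (by omega)
      _ ≤ 2 * (2 ^ d * m.choose j) := by gcongr
      _ = 2 ^ (d + 1) * m.choose j := by ring

lemma choose_succ_add_choose_lt_choose_add_choose {u a b : ℕ} (hba : b < a)
    (ha : 2 ^ (2 * u + 6) ≤ a) :
    a.choose (u + 1) + b.choose (u + 2) < a.choose (u + 2) + b.choose (u + 1) := by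
  rcases le_or_gt b (2 * u + 6) with hb | hb
  · -- `b.choose (u + 2) ≤ 2 ^ b` is negligible against `a ≤ a.choose (u + 1)`
    have ha' := (four_mul_add_four_lt_two_pow (2 * u)).trans_le ha
    have hsmall : b.choose (u + 2) ≤ a :=
      (choose_le_two_pow b _).trans ((Nat.pow_le_pow_right two_pos hb).trans ha)
    have hlarge : a ≤ a.choose (u + 1) := by
      simpa using choose_le_choose_of_le_of_two_mul_le (m := a) (j' := 1) (j := u + 1)
        (by omega) (by omega)
    have htwice : 2 * a.choose (u + 1) < a.choose (u + 2) :=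
      mul_choose_lt_choose_succ (by omega) (by omega)
    omega
  · -- `m ↦ m.choose (u + 2) - m.choose (u + 1)` increases from `b` on, strictly at `b`
    clear ha
    induction a, hba using Nat.le_induction with
    | base =>
      have := mul_choose_lt_choose_succ (K := 1) (m := b) (j := u) (by omega) (by omega)
      have h1 : (b + 1).choose (u + 2) = b.choose (u + 1) + b.choose (u + 2) :=
        choose_succ_succ' b (u + 1)
      rw [choose_succ_succ' b u, h1]
      omega
    | succ a hab ih =>
      have := choose_le_succ_of_lt_half_left (r := u) (n := a) (by omega)
      have h1 : (a + 1).choose (u + 2) = a.choose (u + 1) + a.choose (u + 2) :=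
        choose_succ_succ' a (u + 1)
      rw [choose_succ_succ' a u, h1]
      omega

lemma choose_succ_add_choose_lt_choose {u m : ℕ} (hm : 3 * u + 3 ≤ m) :
    (m + 2).choose (u + 1) + m.choose (u + 2) < (m + 2).choose (u + 2) := by
  have h1 : (m + 1).choose u ≤ 2 * m.choose u := choose_succ_le_two_mul_choose (by omega)
  have h2 : 2 * m.choose u < m.choose (u + 1) := mul_choose_lt_choose_succ (by omega) (by omega)
  have h3 : (m + 2).choose (u + 2) = (m + 1).choose (u + 1) + (m + 1).choose (u + 2) :=
    choose_succ_succ' (m + 1) (u + 1)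
  have h4 : (m + 1).choose (u + 2) = m.choose (u + 1) + m.choose (u + 2) :=
    choose_succ_succ' m (u + 1)
  rw [choose_succ_succ' (m + 1) u, h3, h4]
  omega

end Nat

lemma two_pow_le_of_two_pow_mul_le {r n : ℕ} (hn : 2 ^ (2 * r + 6) * (r + 1) ^ 4 ≤ n) :
    2 ^ (2 * r + 6) ≤ n :=
  (Nat.le_mul_of_pos_right _ (by positivity)).trans hn

lemma two_mul_le_of_two_pow_le {r n : ℕ} (hn : 2 ^ (2 * r + 6) ≤ n) : 2 * r ≤ n := by
  have := Nat.lt_two_pow_self (n := 2 * r + 6)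
  omega

lemma choose_three_mul_two_pow_mul_add_le {r n : ℕ} (hr : 3 ≤ r)
    (hn : 2 ^ (2 * r + 6) * (r + 1) ^ 4 ≤ n) :
    (2 * r - 1).choose 3 * 2 ^ (r - 1) * (r - 2) + (2 * r + 2) ≤ n := by
  have hpow : 1 ≤ 2 ^ (r - 1) := Nat.one_le_two_pow
  have hC : (2 * r - 1).choose 3 ≤ 8 * (r + 1) ^ 3 :=
    (Nat.choose_le_pow _ _).trans <| by
      calc (2 * r - 1) ^ 3 ≤ (2 * (r + 1)) ^ 3 := by gcongr; omega
        _ = 8 * (r + 1) ^ 3 := by ring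
  have h16 : 2 ^ (r - 1) * 16 ≤ 2 ^ (2 * r + 6) :=
    calc 2 ^ (r - 1) * 16 = 2 ^ (r - 1 + 4) := by ring
      _ ≤ 2 ^ (2 * r + 6) := Nat.pow_le_pow_right two_pos (by omega)
  have h1 : (2 * r - 1).choose 3 * 2 ^ (r - 1) * (r - 2)
      ≤ 8 * (r + 1) ^ 3 * 2 ^ (r - 1) * (r + 1) :=
    Nat.mul_le_mul (Nat.mul_le_mul_right _ hC) (by omega)
  have h2 : 2 * r + 2 ≤ 8 * (r + 1) ^ 4 * 2 ^ (r - 1) :=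
    calc 2 * r + 2 ≤ 8 * (r + 1) ^ 4 := by nlinarith [Nat.one_le_pow 3 (r + 1) (by omega)]
      _ ≤ 8 * (r + 1) ^ 4 * 2 ^ (r - 1) := Nat.le_mul_of_pos_right _ hpow
  calc (2 * r - 1).choose 3 * 2 ^ (r - 1) * (r - 2) + (2 * r + 2)
      ≤ 8 * (r + 1) ^ 3 * 2 ^ (r - 1) * (r + 1) + 8 * (r + 1) ^ 4 * 2 ^ (r - 1) := by omega
    _ = 2 ^ (r - 1) * 16 * (r + 1) ^ 4 := by ring
    _ ≤ 2 ^ (2 * r + 6) * (r + 1) ^ 4 := by gcongr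
    _ ≤ n := hn

lemma choose_three_mul_choose_lt_choose {r n k : ℕ} (hr : 3 ≤ r) (hk : k ≤ r)
    (hn : 2 ^ (2 * r + 6) * (r + 1) ^ 4 ≤ n) :
    (2 * r - 1).choose 3 * (n - 3).choose (r - 3) < (n - 2 - k).choose (r - 2) := by
  set K := (2 * r - 1).choose 3 * 2 ^ (r - 1)
  have hK : K * (r - 2) + (2 * r + 2) ≤ n := choose_three_mul_two_pow_mul_add_le hr hn
  have hlin := (Nat.four_mul_add_four_lt_two_pow (2 * r)).trans_le (two_pow_le_of_two_pow_mul_le hn)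
  have hshift : (n - 3).choose (r - 3) ≤ 2 ^ (r - 1) * (n - r - 2).choose (r - 3) := by
    rw [show n - 3 = n - r - 2 + (r - 1) by omega]
    exact Nat.choose_add_le_two_pow_mul_choose _ (by omega)
  have hgap : K * (n - r - 2).choose (r - 3) < (n - r - 2).choose (r - 3 + 1) :=
    Nat.mul_choose_lt_choose_succ (by omega) <| by
      show K * (r - 3 + 1) < n - r - 2 - (r - 3)
      rw [show r - 3 + 1 = r - 2 by omega]
      omega
  calc (2 * r - 1).choose 3 * (n - 3).choose (r - 3)
      ≤ K * (n - r - 2).choose (r - 3) := by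
        rw [mul_assoc]; exact Nat.mul_le_mul_left _ hshift
    _ < (n - r - 2).choose (r - 3 + 1) := hgap
    _ = (n - r - 2).choose (r - 2) := by rw [show r - 3 + 1 = r - 2 by omega]
    _ ≤ (n - 2 - k).choose (r - 2) := Nat.choose_le_choose _ (by omega)

lemma mem_chooseFam {n r : ℕ} {A : Finset ℕ} : A ∈ chooseFam n r ↔ A ⊆ Icc 1 n ∧ #A = r :=
  mem_powersetCard

lemma succ_le_card_filter_le_sort_get (A : Finset ℕ) (i : ℕ)
    (hi : i < (A.sort (· ≤ ·)).length) :
    i + 1 ≤ #(A.filter (· ≤ (A.sort (· ≤ ·)).get ⟨i, hi⟩)) := by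
  set l := A.sort (· ≤ ·)
  have h := card_le_card_of_injOn (s := (univ : Finset (Fin (i + 1))))
    (t := A.filter (· ≤ l.get ⟨i, hi⟩)) (fun j => l.get ⟨j, j.2.trans_le hi⟩)
    (fun j _ => mem_filter.2 ⟨(mem_sort _).1 (List.get_mem _ _),
      (pairwise_sort A _).rel_get_of_le (Fin.mk_le_mk.2 (Nat.lt_succ_iff.1 j.2))⟩)
    (fun j₁ _ j₂ _ h => Fin.ext (by simpa using (sort_nodup A _).get_inj_iff.1 h))
  simpa using h

lemma sort_get_le_of_succ_le_card_filter_le (B : Finset ℕ) (i : ℕ)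
    (hi : i < (B.sort (· ≤ ·)).length) {m : ℕ} (h : i + 1 ≤ #(B.filter (· ≤ m))) :
    (B.sort (· ≤ ·)).get ⟨i, hi⟩ ≤ m := by
  set l := B.sort (· ≤ ·)
  by_contra! hlt
  have hidx : ∀ x ∈ B.filter (· ≤ m), l.idxOf x ∈ range i := by
    intro x hx
    obtain ⟨hxB, hxm⟩ := mem_filter.1 hx
    have hxl : l.idxOf x < l.length := List.idxOf_lt_length_iff.2 ((mem_sort _).2 hxB)
    by_contra hge
    have := (pairwise_sort B _).rel_get_of_le (a := ⟨i, hi⟩) (b := ⟨_, hxl⟩)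
      (Fin.mk_le_mk.2 (by simpa using hge))
    rw [List.idxOf_get] at this
    omega
  have hinj : Set.InjOn l.idxOf (B.filter (· ≤ m)) := fun x hx y hy hxy =>
    List.idxOf_inj ((mem_sort _).2 (mem_filter.1 hx).1) |>.1 hxy
  have := card_le_card_of_injOn _ hidx hinj
  simp only [card_range] at this
  omega

lemma domLE_of_card_filter_le {B A : Finset ℕ} (hcard : #B = #A)
    (h : ∀ m, #(A.filter (· ≤ m)) ≤ #(B.filter (· ≤ m))) : DomLE B A :=
  ⟨hcard, fun i hB hA => sort_get_le_of_succ_le_card_filter_le B i hB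
    ((succ_le_card_filter_le_sort_get A i hA).trans (h _))⟩

def pinnedFam (n r : ℕ) (I O : Finset ℕ) : Finset (Finset ℕ) :=
  (chooseFam n r).filter fun A => I ⊆ A ∧ Disjoint A O

lemma mem_pinnedFam {n r : ℕ} {I O A : Finset ℕ} :
    A ∈ pinnedFam n r I O ↔ A ∈ chooseFam n r ∧ I ⊆ A ∧ Disjoint A O :=
  mem_filter

lemma card_pinnedFam {n r : ℕ} {I O : Finset ℕ} (hI : I ⊆ Icc 1 n) (hO : O ⊆ Icc 1 n)
    (hIO : Disjoint I O) (hIr : #I ≤ r) :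
    #(pinnedFam n r I O) = (n - #I - #O).choose (r - #I) := by
  have hfree : #(Icc 1 n \ (I ∪ O)) = n - #I - #O := by
    rw [card_sdiff_of_subset (union_subset hI hO), card_union_of_disjoint hIO, Nat.card_Icc]
    omega
  rw [← hfree, ← card_powersetCard]
  refine card_bij' (fun A _ => A \ I) (fun S _ => S ∪ I) ?_ ?_ ?_ ?_
  · intro A hA
    obtain ⟨hA, hIA, hAO⟩ := mem_pinnedFam.1 hA
    obtain ⟨hAn, hAr⟩ := mem_chooseFam.1 hA
    refine mem_powersetCard.2 ⟨fun x hx => ?_, by rw [card_sdiff_of_subset hIA, hAr]⟩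
    obtain ⟨hxA, hxI⟩ := mem_sdiff.1 hx
    exact mem_sdiff.2 ⟨hAn hxA, by simp [hxI, disjoint_left.1 hAO hxA]⟩
  · intro S hS
    obtain ⟨hS, hSr⟩ := mem_powersetCard.1 hS
    have hSIO : Disjoint S (I ∪ O) := disjoint_of_subset_left hS disjoint_sdiff_self_left
    rw [disjoint_union_right] at hSIO
    refine mem_pinnedFam.2 ⟨mem_chooseFam.2 ⟨union_subset (hS.trans sdiff_subset) hI, ?_⟩,
      subset_union_right, disjoint_union_left.2 ⟨hSIO.2, hIO⟩⟩
    rw [card_union_of_disjoint hSIO.1, hSr]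
    omega
  · intro A hA
    exact sdiff_union_of_subset (mem_pinnedFam.1 hA).2.1
  · intro S hS
    exact union_sdiff_cancel_right
      (disjoint_of_subset_left (mem_powersetCard.1 hS).1 disjoint_sdiff_self_left |>.mono_right
        subset_union_left)

lemma hit_mono {X : Finset ℕ} {𝒜 ℬ : Finset (Finset ℕ)} (h : 𝒜 ⊆ ℬ) : hit X 𝒜 ≤ hit X ℬ :=
  card_le_card (filter_subset_filter _ h)

lemma hit_sdiff_add_hit_inter (X : Finset ℕ) (𝒜 ℬ : Finset (Finset ℕ)) :
    hit X (𝒜 \ ℬ) + hit X (𝒜 ∩ ℬ) = hit X 𝒜 := by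
  unfold hit
  rw [← card_union_of_disjoint (disjoint_filter_filter (disjoint_sdiff_inter 𝒜 ℬ)),
    ← filter_union, sdiff_union_inter]

lemma hit_lt_hit_of_hit_sdiff_lt {X : Finset ℕ} {𝒜 ℬ : Finset (Finset ℕ)}
    (h : hit X (𝒜 \ ℬ) < hit X (ℬ \ 𝒜)) : hit X 𝒜 < hit X ℬ := by
  have h𝒜 := hit_sdiff_add_hit_inter X 𝒜 ℬ
  have hℬ := hit_sdiff_add_hit_inter X ℬ 𝒜
  rw [inter_comm] at hℬ
  omega

lemma hit_pinnedFam_add_card_pinnedFam (n r : ℕ) (I O X : Finset ℕ) :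
    hit X (pinnedFam n r I O) + #(pinnedFam n r I (O ∪ X)) = #(pinnedFam n r I O) := by
  have : pinnedFam n r I (O ∪ X) =
      (pinnedFam n r I O).filter fun A => ¬ (A ∩ X).Nonempty := by
    ext A
    simp only [mem_filter, mem_pinnedFam, disjoint_union_right, not_nonempty_iff_eq_empty,
      ← disjoint_iff_inter_eq_empty, and_assoc]
  rw [this]
  exact card_filter_add_card_filter_not _

lemma hit_pinnedFam_add_choose {n r : ℕ} {I O X : Finset ℕ} (hI : I ⊆ Icc 1 n)
    (hOX : O ∪ X ⊆ Icc 1 n) (hIOX : Disjoint I (O ∪ X)) (hIr : #I ≤ r) :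
    hit X (pinnedFam n r I O) + (n - #I - #O - #(X \ O)).choose (r - #I)
      = (n - #I - #O).choose (r - #I) := by
  have h := hit_pinnedFam_add_card_pinnedFam n r I O X
  rwa [card_pinnedFam hI hOX hIOX hIr, card_pinnedFam hI (subset_union_left.trans hOX)
    (hIOX.mono_right subset_union_left) hIr, union_comm, ← card_sdiff_add_card,
    add_comm (#(X \ O)), ← Nat.sub_sub] at h

lemma card_filter_le_le_card_filter_le_Ico {T : Finset ℕ} {a : ℕ} (hT : ∀ x ∈ T, a ≤ x)
    (j : ℕ) : #(T.filter (· ≤ j)) ≤ #((Ico a (a + #T)).filter (· ≤ j)) := by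
  have hIco : (Ico a (a + #T)).filter (· ≤ j) = Ico a (min (a + #T) (j + 1)) := by
    ext x
    simp only [mem_filter, mem_Ico, lt_min_iff]
    omega
  have hsub : T.filter (· ≤ j) ⊆ Ico a (j + 1) := fun x hx => by
    obtain ⟨hxT, hxj⟩ := mem_filter.1 hx
    exact mem_Ico.2 ⟨hT x hxT, by omega⟩
  have h₁ := card_le_card hsub
  have h₂ := card_filter_le T (· ≤ j)
  rw [hIco, Nat.card_Ico]
  rw [Nat.card_Ico] at h₁
  omega

namespace IsLCIF

variable {n r : ℕ} {𝒜 : Finset (Finset ℕ)}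

lemma mem_Icc_of_mem (h𝒜 : IsLCIF n r 𝒜) {A : Finset ℕ} (hA : A ∈ 𝒜) {x : ℕ} (hx : x ∈ A) :
    x ∈ Icc 1 n :=
  (mem_chooseFam.1 (h𝒜.1 hA)).1 hx

lemma two_le_of_mem (h𝒜 : IsLCIF n r 𝒜) {A : Finset ℕ} (hA : A ∈ 𝒜) (h1A : 1 ∉ A) {x : ℕ}
    (hx : x ∈ A) : 2 ≤ x := by
  have := (mem_Icc.1 (h𝒜.mem_Icc_of_mem hA hx)).1
  have : x ≠ 1 := fun h => h1A (h ▸ hx)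
  omega

lemma card_filter_le_le (h𝒜 : IsLCIF n r 𝒜) {A : Finset ℕ} (hA : A ∈ 𝒜) (m : ℕ) :
    #(A.filter (· ≤ m)) ≤ r :=
  (mem_chooseFam.1 (h𝒜.1 hA)).2 ▸ card_filter_le _ _

lemma mem_of_card_filter_le (h𝒜 : IsLCIF n r 𝒜) {A B : Finset ℕ} (hA : A ∈ 𝒜)
    (hB : B ∈ chooseFam n r) (hAB : ∀ m, #(A.filter (· ≤ m)) ≤ #(B.filter (· ≤ m))) :
    B ∈ 𝒜 :=
  h𝒜.2.2 A hA B hB <| domLE_of_card_filter_le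
    (by rw [(mem_chooseFam.1 hB).2, (mem_chooseFam.1 (h𝒜.1 hA)).2]) hAB

lemma exists_mem_filter_le_eq (h𝒜 : IsLCIF n r 𝒜) {m : ℕ} (hm : m ≤ n) {A T : Finset ℕ}
    (hA : A ∈ 𝒜) (hT : T ⊆ Icc 1 m) (hcard : #T = #(A.filter (· ≤ m)))
    (hAT : ∀ j, #((A.filter (· ≤ m)).filter (· ≤ j)) ≤ #(T.filter (· ≤ j))) :
    ∃ A' ∈ 𝒜, A'.filter (· ≤ m) = T := by
  obtain ⟨hAn, hAr⟩ := mem_chooseFam.1 (h𝒜.1 hA)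
  set H := A.filter fun x => ¬ x ≤ m
  have hTH : Disjoint T H := disjoint_left.2 fun x hxT hxH =>
    (mem_filter.1 hxH).2 (mem_Icc.1 (hT hxT)).2
  have hsplit (S : Finset ℕ) (j : ℕ) (hS : Disjoint S H) :
      #((S ∪ H).filter (· ≤ j)) = #(S.filter (· ≤ j)) + #(H.filter (· ≤ j)) := by
    rw [filter_union, card_union_of_disjoint (disjoint_filter_filter hS)]
  have hA_eq : A.filter (· ≤ m) ∪ H = A := filter_union_filter_not_eq _ _
  have hAH : Disjoint (A.filter (· ≤ m)) H := disjoint_filter_filter_not _ _ _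
  refine ⟨T ∪ H, h𝒜.mem_of_card_filter_le hA ?_ fun j => ?_, ?_⟩
  · refine mem_chooseFam.2 ⟨union_subset (hT.trans (Icc_subset_Icc_right hm))
      ((filter_subset _ _).trans hAn), ?_⟩
    rw [card_union_of_disjoint hTH, hcard, ← card_union_of_disjoint hAH, hA_eq, hAr]
  · conv_lhs => rw [← hA_eq]
    rw [hsplit _ _ hAH, hsplit _ _ hTH]
    exact Nat.add_le_add_right (hAT j) _
  · rw [filter_union, filter_true_of_mem fun x hx => (mem_Icc.1 (hT hx)).2,
      filter_false_of_mem fun x hx => (mem_filter.1 hx).2, union_empty]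

lemma filter_le_union_mem (h𝒜 : IsLCIF n r 𝒜) {m : ℕ} (hm : m ≤ n) {A S : Finset ℕ}
    (hA : A ∈ 𝒜) (hS : S ⊆ Icc 1 m) (hSA : Disjoint S (A.filter (· ≤ m)))
    (hcard : #(A.filter (· ≤ m)) + #S = r) : A.filter (· ≤ m) ∪ S ∈ 𝒜 := by
  obtain ⟨hAn, hAr⟩ := mem_chooseFam.1 (h𝒜.1 hA)
  have hAm : A.filter (· ≤ m) ⊆ Icc 1 m := fun x hx => by
    obtain ⟨hxA, hxm⟩ := mem_filter.1 hx
    exact mem_Icc.2 ⟨(mem_Icc.1 (hAn hxA)).1, hxm⟩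
  have hBr : #(A.filter (· ≤ m) ∪ S) = r := by rw [card_union_of_disjoint hSA.symm, hcard]
  refine h𝒜.mem_of_card_filter_le hA (mem_chooseFam.2 ⟨(union_subset hAm hS).trans
    (Icc_subset_Icc_right hm), hBr⟩) fun j => ?_
  rcases le_or_gt j m with hjm | hjm
  · calc #(A.filter (· ≤ j)) = #((A.filter (· ≤ m)).filter (· ≤ j)) := by
          rw [filter_filter]; congr 1; exact filter_congr fun x _ => by omega
      _ ≤ #((A.filter (· ≤ m) ∪ S).filter (· ≤ j)) :=
          card_le_card (filter_subset_filter _ subset_union_left)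
  · rw [filter_true_of_mem fun x hx => (mem_Icc.1 (union_subset hAm hS hx)).2.trans hjm.le,
      hBr, ← hAr]
    exact card_filter_le _ _

/-- Otherwise, compressing both members into `[1, 2r]` with disjoint fillings would give two
disjoint members. -/
lemma exists_mem_mem_filter_le (h𝒜 : IsLCIF n r 𝒜) (hn : 2 * r ≤ n) {A B : Finset ℕ}
    (hA : A ∈ 𝒜) (hB : B ∈ 𝒜) : ∃ x ∈ B, x ∈ A.filter (· ≤ 2 * r) := by
  by_contra! hAB
  set TA := A.filter (· ≤ 2 * r)
  set TB := B.filter (· ≤ 2 * r)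
  have hT : Disjoint TA TB := disjoint_right.2 fun x hxB hxA => hAB x (mem_filter.1 hxB).1 hxA
  have hTA : #TA ≤ r := h𝒜.card_filter_le_le hA _
  have hTB : #TB ≤ r := h𝒜.card_filter_le_le hB _
  have hTsub (C : Finset ℕ) (hC : C ∈ 𝒜) : C.filter (· ≤ 2 * r) ⊆ Icc 1 (2 * r) := fun x hx => by
    obtain ⟨hxC, hx⟩ := mem_filter.1 hx
    exact mem_Icc.2 ⟨(mem_Icc.1 (h𝒜.mem_Icc_of_mem hC hxC)).1, hx⟩
  set F := Icc 1 (2 * r) \ (TA ∪ TB)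
  have hF : #F = 2 * r - #TA - #TB := by
    rw [card_sdiff_of_subset (union_subset (hTsub A hA) (hTsub B hB)),
      card_union_of_disjoint hT, Nat.card_Icc]
    omega
  obtain ⟨SA, hSA, hSAcard⟩ := exists_subset_card_eq (s := F) (n := r - #TA) (by omega)
  obtain ⟨SB, hSB, hSBcard⟩ := exists_subset_card_eq (s := F \ SA) (n := r - #TB)
    (by rw [card_sdiff_of_subset hSA]; omega)
  have hFT : Disjoint F (TA ∪ TB) := disjoint_sdiff_self_left
  rw [disjoint_union_right] at hFT
  have hA' : TA ∪ SA ∈ 𝒜 := h𝒜.filter_le_union_mem hn hA (hSA.trans sdiff_subset)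
    (disjoint_of_subset_left hSA hFT.1) (show #TA + #SA = r by omega)
  have hB' : TB ∪ SB ∈ 𝒜 := h𝒜.filter_le_union_mem hn hB
    ((hSB.trans sdiff_subset).trans sdiff_subset)
    (disjoint_of_subset_left (hSB.trans sdiff_subset) hFT.2) (show #TB + #SB = r by omega)
  obtain ⟨x, hx⟩ := h𝒜.2.1 _ hA' _ hB'
  simp only [mem_inter, mem_union] at hx
  obtain ⟨hxA | hxA, hxB | hxB⟩ := hx
  · exact disjoint_left.1 hT hxA hxB
  · exact disjoint_left.1 hFT.1 ((hSB.trans sdiff_subset) hxB) hxA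
  · exact disjoint_left.1 hFT.2 (hSA hxA) hxB
  · exact (mem_sdiff.1 (hSB hxB)).2 hxA

lemma exists_mem_filter_le_eq_Ico (h𝒜 : IsLCIF n r 𝒜) (hn : 2 * r ≤ n) {A : Finset ℕ}
    (hA : A ∈ 𝒜) {a : ℕ} (ha₁ : 1 ≤ a) (ha : a ≤ r + 1) (hAa : ∀ x ∈ A, a ≤ x) :
    ∃ A' ∈ 𝒜, A'.filter (· ≤ 2 * r) = Ico a (a + #(A.filter (· ≤ 2 * r))) := by
  have hk := h𝒜.card_filter_le_le hA (2 * r)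
  refine h𝒜.exists_mem_filter_le_eq hn hA (fun x hx => ?_) (by rw [Nat.card_Ico]; omega)
    (card_filter_le_le_card_filter_le_Ico fun x hx => hAa x (mem_filter.1 hx).1)
  rw [mem_Ico] at hx
  rw [mem_Icc]
  omega

lemma two_le_card_filter_le_of_one_notMem (h𝒜 : IsLCIF n r 𝒜) (hr : 1 ≤ r) (hn : 2 * r ≤ n)
    {A : Finset ℕ} (hA : A ∈ 𝒜) (h1A : 1 ∉ A) : 2 ≤ #(A.filter (· ≤ 2 * r)) := by
  have hk := h𝒜.card_filter_le_le hA (2 * r)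
  obtain ⟨A₀, hA₀, hW₀⟩ := h𝒜.exists_mem_filter_le_eq_Ico hn hA (a := 2) (by omega) (by omega)
    fun x => h𝒜.two_le_of_mem hA h1A
  obtain ⟨A₁, hA₁, hW₁⟩ := h𝒜.exists_mem_filter_le_eq_Ico hn hA₀ (a := 1) le_rfl (by omega)
    fun x hx => (mem_Icc.1 (h𝒜.mem_Icc_of_mem hA₀ hx)).1
  obtain ⟨x, hxA₁, hx⟩ := h𝒜.exists_mem_mem_filter_le hn hA₀ hA₁
  rw [hW₀, mem_Ico] at hx
  have : x ∈ A₁.filter (· ≤ 2 * r) := mem_filter.2 ⟨hxA₁, by omega⟩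
  rw [hW₁, hW₀, Nat.card_Ico, mem_Ico] at this
  omega

lemma pair_subset_of_filter_le_eq_pair (h𝒜 : IsLCIF n r 𝒜) (hn : 2 * r ≤ n) {A₀ : Finset ℕ}
    (hA₀ : A₀ ∈ 𝒜) (hW : A₀.filter (· ≤ 2 * r) = {2, 3}) {B : Finset ℕ} (hB : B ∈ 𝒜)
    (h1B : 1 ∉ B) : {2, 3} ⊆ B := by
  have h3 : 3 ∈ A₀.filter (· ≤ 2 * r) := by simp [hW]
  have h3r : 3 ≤ 2 * r := (mem_filter.1 h3).2
  have hmem (C : Finset ℕ) (hC : C ∈ 𝒜) (c : ℕ) (hWC : C.filter (· ≤ 2 * r) = {1, c}) :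
      c ∈ B := by
    obtain ⟨x, hxB, hx⟩ := h𝒜.exists_mem_mem_filter_le hn hC hB
    rw [hWC, mem_insert, mem_singleton] at hx
    rcases hx with rfl | rfl
    · exact absurd hxB h1B
    · exact hxB
  obtain ⟨C₂, hC₂, hW₂⟩ := h𝒜.exists_mem_filter_le_eq_Ico hn hA₀ (a := 1) le_rfl (by omega)
    fun x hx => (mem_Icc.1 (h𝒜.mem_Icc_of_mem hA₀ hx)).1
  rw [hW, show Ico 1 (1 + #({2, 3} : Finset ℕ)) = {1, 2} by decide] at hW₂
  obtain ⟨C₃, hC₃, hW₃⟩ := h𝒜.exists_mem_filter_le_eq hn hA₀ (T := {1, 3})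
    (by intro x; simp only [mem_insert, mem_singleton, mem_Icc]; omega) (by rw [hW]; rfl)
    (fun j => by
      rw [hW]
      simp only [filter_insert, filter_singleton]
      split_ifs <;> simp_all)
  intro x hx
  rw [mem_insert, mem_singleton] at hx
  rcases hx with rfl | rfl
  · exact hmem C₂ hC₂ 2 hW₂
  · exact hmem C₃ hC₃ 3 hW₃

end IsLCIF

lemma mem_starFam {n r : ℕ} {A : Finset ℕ} : A ∈ starFam n r ↔ A ∈ chooseFam n r ∧ 1 ∈ A :=
  mem_filter

lemma starFam_isLCIF (n r : ℕ) : IsLCIF n r (starFam n r) := by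
  refine ⟨filter_subset _ _, fun A hA B hB => ⟨1, mem_inter.2 ⟨(mem_starFam.1 hA).2,
    (mem_starFam.1 hB).2⟩⟩, fun A hA B hB hBA => mem_starFam.2 ⟨hB, ?_⟩⟩
  obtain ⟨-, h1A⟩ := mem_starFam.1 hA
  have hA0 : 0 < (A.sort (· ≤ ·)).length := by rw [length_sort]; exact card_pos.2 ⟨1, h1A⟩
  have hB0 : 0 < (B.sort (· ≤ ·)).length := by rw [length_sort, hBA.1]; rwa [length_sort] at hA0
  have hbB : (B.sort (· ≤ ·)).get ⟨0, hB0⟩ ∈ B := (mem_sort _).1 (List.get_mem _ _)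
  have hb1 : (B.sort (· ≤ ·)).get ⟨0, hB0⟩ ≤ 1 := (hBA.2 0 hB0 hA0).trans
    (sort_get_le_of_succ_le_card_filter_le A 0 hA0 (card_pos.2 ⟨1, mem_filter.2 ⟨h1A, le_rfl⟩⟩))
  have := (mem_Icc.1 ((mem_chooseFam.1 hB).1 hbB)).1
  rwa [show (B.sort (· ≤ ·)).get ⟨0, hB0⟩ = 1 by omega] at hbB

lemma starFam_isMLCIF {n r : ℕ} (hr : 1 ≤ r) (hn : 2 * r ≤ n) : IsMLCIF n r (starFam n r) := by
  refine ⟨starFam_isLCIF n r, fun ℬ hℬ hsub => Subset.antisymm (fun B hB => ?_) hsub⟩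
  refine mem_starFam.2 ⟨hℬ.1 hB, ?_⟩
  by_contra h1B
  obtain ⟨hBn, hBr⟩ := mem_chooseFam.1 (hℬ.1 hB)
  obtain ⟨S, hS⟩ : (pinnedFam n r {1} B).Nonempty := by
    rw [← card_pos, card_pinnedFam (by simp; omega) hBn (disjoint_singleton_left.2 h1B)
      (by simpa using hr)]
    exact Nat.choose_pos (by simp only [card_singleton]; omega)
  obtain ⟨hS, h1S, hSB⟩ := mem_pinnedFam.1 hS
  obtain ⟨x, hx⟩ := hℬ.2.1 S (hsub (mem_starFam.2 ⟨hS, singleton_subset_iff.1 h1S⟩)) B hB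
  exact disjoint_left.1 hSB (mem_inter.1 hx).1 (mem_inter.1 hx).2

lemma IsMLCIF.exists_mem_one_notMem {n r : ℕ} {𝒜 : Finset (Finset ℕ)} (h𝒜 : IsMLCIF n r 𝒜)
    (hne : 𝒜 ≠ starFam n r) : ∃ A ∈ 𝒜, 1 ∉ A := by
  by_contra! h
  exact hne (h𝒜.2 _ (starFam_isLCIF n r) fun A hA => mem_starFam.2 ⟨h𝒜.1.1 hA, h A hA⟩).symm

lemma card_le_choose_mul_choose_of_le_card_inter {n r t : ℕ} {𝒜 : Finset (Finset ℕ)}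
    (h𝒜 : 𝒜 ⊆ chooseFam n r) {W : Finset ℕ} (hW : W ⊆ Icc 1 n) (ht : t ≤ r)
    (h : ∀ B ∈ 𝒜, t ≤ #(B ∩ W)) : #𝒜 ≤ (#W).choose t * (n - t).choose (r - t) :=
  calc #𝒜 ≤ #((W.powersetCard t).biUnion fun P => pinnedFam n r P ∅) :=
        card_le_card fun B hB => by
          obtain ⟨P, hP, hPt⟩ := exists_subset_card_eq (h B hB)
          exact mem_biUnion.2 ⟨P, mem_powersetCard.2 ⟨hP.trans inter_subset_right, hPt⟩,
            mem_pinnedFam.2 ⟨h𝒜 hB, hP.trans inter_subset_left, disjoint_empty_right _⟩⟩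
    _ ≤ ∑ P ∈ W.powersetCard t, #(pinnedFam n r P ∅) := card_biUnion_le
    _ = ∑ P ∈ W.powersetCard t, (n - t).choose (r - t) := sum_congr rfl fun P hP => by
        obtain ⟨hPW, hPt⟩ := mem_powersetCard.1 hP
        rw [card_pinnedFam (hPW.trans hW) (empty_subset _) (disjoint_empty_right _) (hPt ▸ ht),
          hPt, card_empty, Nat.sub_zero]
    _ = (#W).choose t * (n - t).choose (r - t) := by
        rw [sum_const, card_powersetCard, smul_eq_mul]

lemma two_le_card_sdiff_pair {X : Finset ℕ} (hX : ¬ Disjoint X {2, 3})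
    (hc2 : ¬ (#X = 2 ∧ (X ∩ {2, 3}).Nonempty)) (hc3 : ¬ (#X = 3 ∧ ({2, 3} : Finset ℕ) ⊆ X))
    (hq : (X \ {2, 3}).Nonempty) : 2 ≤ #(X \ {2, 3}) := by
  have hsplit := card_sdiff_add_card_inter X {2, 3}
  have hI : (X ∩ {2, 3}).Nonempty := not_disjoint_iff_nonempty_inter.1 hX
  have hI2 : #(X ∩ {2, 3}) ≤ 2 := card_le_card inter_subset_right |>.trans card_le_two
  have := card_pos.2 hI
  have := card_pos.2 hq
  by_contra! h
  rcases (show #(X ∩ {2, 3}) = 1 ∨ #(X ∩ {2, 3}) = 2 by omega) with h1 | h2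
  · exact hc2 ⟨by omega, hI⟩
  · have : X ∩ {2, 3} = {2, 3} :=
      eq_of_subset_of_card_le inter_subset_right (by rw [h2]; exact card_le_two)
    exact hc3 ⟨by omega, this ▸ inter_subset_left⟩

lemma hit_pinnedFam_pair_lt_hit_pinnedFam_one {n r : ℕ} (hr : 3 ≤ r) (hn : 2 ^ (2 * r + 6) ≤ n)
    {X : Finset ℕ} (hX : X ⊆ Icc 2 n) (hc2 : ¬ (#X = 2 ∧ (X ∩ {2, 3}).Nonempty))
    (hc3 : ¬ (#X = 3 ∧ ({2, 3} : Finset ℕ) ⊆ X)) (hq : (X \ {2, 3}).Nonempty) :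
    hit X (pinnedFam n r {2, 3} {1}) < hit X (pinnedFam n r {1} {2, 3}) := by
  have hn' := (Nat.four_mul_add_four_lt_two_pow (2 * r)).trans_le hn
  have hXn : X ⊆ Icc 1 n := hX.trans (Icc_subset_Icc_left one_le_two)
  have h1n : ({1} : Finset ℕ) ⊆ Icc 1 n := by simp; omega
  have h23n : ({2, 3} : Finset ℕ) ⊆ Icc 1 n := by
    intro x; simp only [mem_insert, mem_singleton, mem_Icc]; omega
  have h1X : 1 ∉ X := fun h => by have := mem_Icc.1 (hX h); omega
  have h23 : #({2, 3} : Finset ℕ) = 2 := card_pair (by decide)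
  have hq1 : 0 < #(X \ {2, 3}) := card_pos.2 hq
  have hr' : r - 3 + 1 = r - 2 ∧ r - 3 + 2 = r - 1 := by omega
  have h1 := hit_pinnedFam_add_choose (r := r) h1n (union_subset h23n hXn) (by simp [h1X])
    (by simp; omega)
  rw [card_singleton, h23, show n - 1 - 2 = n - 3 by omega] at h1
  by_cases hdisj : Disjoint X {2, 3}
  · have h23' := hit_pinnedFam_add_choose (r := r) h23n (union_subset h1n hXn)
      (disjoint_union_right.2 ⟨by simp, hdisj.symm⟩) (by omega)
    have hXq : #X = #(X \ {2, 3}) := by rw [sdiff_eq_self_of_disjoint hdisj]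
    rw [h23, card_singleton, sdiff_singleton_eq_erase, erase_eq_of_notMem h1X, hXq,
      show n - 2 - 1 = n - 3 by omega] at h23'
    have := Nat.choose_succ_add_choose_lt_choose_add_choose (u := r - 3) (a := n - 3)
      (b := n - 3 - #(X \ {2, 3})) (by omega) <| by
        have : 2 ^ (2 * (r - 3) + 6) * 2 ≤ 2 ^ (2 * r + 6) := by
          rw [← pow_succ]; exact Nat.pow_le_pow_right two_pos (by omega)
        omega
    rw [hr'.1, hr'.2] at this
    omega
  · have h23' : hit X (pinnedFam n r {2, 3} {1}) ≤ (n - 3).choose (r - 2) := by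
      refine (card_filter_le _ _).trans_eq ?_
      rw [card_pinnedFam h23n h1n (by simp) (by omega), h23, card_singleton, Nat.sub_sub]
    have := Nat.choose_succ_add_choose_lt_choose (u := r - 3) (m := n - 5) (by omega)
    rw [hr'.1, hr'.2, show n - 5 + 2 = n - 3 by omega] at this
    have := Nat.choose_le_choose (r - 1) (show n - 3 - #(X \ {2, 3}) ≤ n - 5 by
      have := two_le_card_sdiff_pair hdisj hc2 hc3 hq; omega)
    omega

namespace IsLCIF

variable {n r : ℕ} {𝒜 : Finset (Finset ℕ)}

lemma one_notMem_of_mem_sdiff_starFam (h𝒜 : IsLCIF n r 𝒜) {B : Finset ℕ}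
    (hB : B ∈ 𝒜 \ starFam n r) : 1 ∉ B := fun h1B =>
  (mem_sdiff.1 hB).2 (mem_starFam.2 ⟨h𝒜.1 (mem_sdiff.1 hB).1, h1B⟩)

lemma pinnedFam_subset_starFam_sdiff (h𝒜 : IsLCIF n r 𝒜) (hn : 2 * r ≤ n) {A₀ I : Finset ℕ}
    (hA₀ : A₀ ∈ 𝒜) (h1I : 1 ∈ I) :
    pinnedFam n r I (A₀.filter (· ≤ 2 * r)) ⊆ starFam n r \ 𝒜 := fun S hS => by
  obtain ⟨hS, hIS, hSW⟩ := mem_pinnedFam.1 hS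
  refine mem_sdiff.2 ⟨mem_starFam.2 ⟨hS, hIS h1I⟩, fun hS𝒜 => ?_⟩
  obtain ⟨x, hxS, hxW⟩ := h𝒜.exists_mem_mem_filter_le hn hA₀ hS𝒜
  exact disjoint_left.1 hSW hxS hxW

lemma hit_sdiff_starFam_lt_of_filter_le_eq_pair (h𝒜 : IsLCIF n r 𝒜) (hr : 3 ≤ r)
    (hn : 2 ^ (2 * r + 6) ≤ n) {A₀ : Finset ℕ} (hA₀ : A₀ ∈ 𝒜)
    (hW : A₀.filter (· ≤ 2 * r) = {2, 3}) {X : Finset ℕ} (hX : X ⊆ Icc 2 n)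
    (hc2 : ¬ (#X = 2 ∧ (X ∩ {2, 3}).Nonempty)) (hc3 : ¬ (#X = 3 ∧ ({2, 3} : Finset ℕ) ⊆ X))
    (hq : (X \ {2, 3}).Nonempty) :
    hit X (𝒜 \ starFam n r) < hit X (starFam n r \ 𝒜) := by
  have hn' := two_mul_le_of_two_pow_le hn
  have hE : 𝒜 \ starFam n r ⊆ pinnedFam n r {2, 3} {1} := fun B hB =>
    mem_pinnedFam.2 ⟨h𝒜.1 (mem_sdiff.1 hB).1,
      h𝒜.pair_subset_of_filter_le_eq_pair hn' hA₀ hW (mem_sdiff.1 hB).1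
        (h𝒜.one_notMem_of_mem_sdiff_starFam hB),
      disjoint_singleton_right.2 (h𝒜.one_notMem_of_mem_sdiff_starFam hB)⟩
  have hM : pinnedFam n r {1} {2, 3} ⊆ starFam n r \ 𝒜 :=
    hW ▸ h𝒜.pinnedFam_subset_starFam_sdiff hn' hA₀ (mem_singleton_self 1)
  exact (hit_mono hE).trans_lt <|
    (hit_pinnedFam_pair_lt_hit_pinnedFam_one hr hn hX hc2 hc3 hq).trans_le (hit_mono hM)

lemma hit_sdiff_starFam_lt_of_three_le (h𝒜 : IsLCIF n r 𝒜) (hr : 3 ≤ r)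
    (hn : 2 ^ (2 * r + 6) * (r + 1) ^ 4 ≤ n)
    (h3 : ∀ B ∈ 𝒜, 1 ∉ B → 3 ≤ #(B.filter (· ≤ 2 * r))) {A : Finset ℕ} (hA : A ∈ 𝒜)
    (h1A : 1 ∉ A) {X : Finset ℕ} {x₀ : ℕ} (hx₀ : x₀ ∈ X) (hx₀r : r + 1 < x₀) (hx₀n : x₀ ≤ n) :
    hit X (𝒜 \ starFam n r) < hit X (starFam n r \ 𝒜) := by
  have hn' := two_mul_le_of_two_pow_le (two_pow_le_of_two_pow_mul_le hn)
  set k := #(A.filter (· ≤ 2 * r))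
  have hk : k ≤ r := h𝒜.card_filter_le_le hA _
  obtain ⟨A₀, hA₀, hW⟩ := h𝒜.exists_mem_filter_le_eq_Ico hn' hA (a := 2) (by omega) (by omega)
    fun x => h𝒜.two_le_of_mem hA h1A
  have hM : (n - 2 - k).choose (r - 2) ≤ hit X (starFam n r \ 𝒜) := by
    have hI : ({1, x₀} : Finset ℕ) ⊆ Icc 1 n := by
      intro x; simp only [mem_insert, mem_singleton, mem_Icc]; omega
    have hW' : Ico 2 (2 + k) ⊆ Icc 1 n := by intro x; simp only [mem_Ico, mem_Icc]; omega
    have hIW : Disjoint {1, x₀} (Ico 2 (2 + k)) := by simp; omega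
    have hI2 : #({1, x₀} : Finset ℕ) = 2 := card_pair (by omega)
    calc (n - 2 - k).choose (r - 2) = #(pinnedFam n r {1, x₀} (Ico 2 (2 + k))) := by
          rw [card_pinnedFam hI hW' hIW (by omega), hI2, Nat.card_Ico, Nat.add_sub_cancel_left]
      _ = hit X (pinnedFam n r {1, x₀} (Ico 2 (2 + k))) := by
          unfold hit
          rw [filter_true_of_mem fun S hS => ⟨x₀, mem_inter.2
            ⟨(mem_pinnedFam.1 hS).2.1 (mem_insert_of_mem (mem_singleton_self x₀)), hx₀⟩⟩]
      _ ≤ hit X (starFam n r \ 𝒜) :=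
          hit_mono (hW ▸ h𝒜.pinnedFam_subset_starFam_sdiff hn' hA₀ (mem_insert_self 1 _))
  have hE : hit X (𝒜 \ starFam n r) ≤ (2 * r - 1).choose 3 * (n - 3).choose (r - 3) := by
    have hthree (B : Finset ℕ) (hB : B ∈ 𝒜 \ starFam n r) : 3 ≤ #(B ∩ Icc 2 (2 * r)) := by
      have h1B := h𝒜.one_notMem_of_mem_sdiff_starFam hB
      refine (h3 B (mem_sdiff.1 hB).1 h1B).trans (card_le_card fun x hx => ?_)
      obtain ⟨hxB, hx⟩ := mem_filter.1 hx
      exact mem_inter.2 ⟨hxB, mem_Icc.2 ⟨h𝒜.two_le_of_mem (mem_sdiff.1 hB).1 h1B hxB, hx⟩⟩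
    have := card_le_choose_mul_choose_of_le_card_inter (sdiff_subset.trans h𝒜.1)
      (Icc_subset_Icc (by omega) hn') hr hthree
    rw [Nat.card_Icc, show 2 * r + 1 - 2 = 2 * r - 1 by omega] at this
    exact (card_filter_le _ _).trans this
  have := choose_three_mul_choose_lt_choose hr hk hn
  omega

end IsLCIF

lemma IsMLCIF.hit_lt_hit_starFam {n r : ℕ} {𝒜 : Finset (Finset ℕ)} (h𝒜 : IsMLCIF n r 𝒜)
    (hne : 𝒜 ≠ starFam n r) (hr : 3 ≤ r) (hn : 2 ^ (2 * r + 6) * (r + 1) ^ 4 ≤ n)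
    {X : Finset ℕ} (hX : X ⊆ Icc 2 n) (hc2 : ¬ (#X = 2 ∧ (X ∩ {2, 3}).Nonempty))
    (hc3 : ¬ (#X = 3 ∧ ({2, 3} : Finset ℕ) ⊆ X)) (hXr : ¬ X ⊆ Icc 2 (r + 1)) :
    hit X 𝒜 < hit X (starFam n r) := by
  have hn₁ := two_pow_le_of_two_pow_mul_le hn
  have hn₂ := two_mul_le_of_two_pow_le hn₁
  obtain ⟨x₀, hx₀, hx₀r⟩ := not_subset.1 hXr
  have hx₀n := mem_Icc.1 (hX hx₀)
  rw [mem_Icc] at hx₀r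
  apply hit_lt_hit_of_hit_sdiff_lt
  by_cases h2 : ∃ B ∈ 𝒜, 1 ∉ B ∧ #(B.filter (· ≤ 2 * r)) = 2
  · obtain ⟨B, hB, h1B, hB2⟩ := h2
    obtain ⟨A₀, hA₀, hW⟩ := h𝒜.1.exists_mem_filter_le_eq_Ico hn₂ hB (a := 2) (by omega)
      (by omega) fun x => h𝒜.1.two_le_of_mem hB h1B
    rw [hB2] at hW
    exact h𝒜.1.hit_sdiff_starFam_lt_of_filter_le_eq_pair hr hn₁ hA₀ hW hX hc2 hc3
      ⟨x₀, mem_sdiff.2 ⟨hx₀, by simp only [mem_insert, mem_singleton]; omega⟩⟩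
  · push Not at h2
    obtain ⟨A, hA, h1A⟩ := h𝒜.exists_mem_one_notMem hne
    refine h𝒜.1.hit_sdiff_starFam_lt_of_three_le hr hn (fun B hB h1B => ?_) hA h1A hx₀
      (by omega) hx₀n.2
    have := h𝒜.1.two_le_card_filter_le_of_one_notMem (by omega) hn₂ hB h1B
    have := h2 B hB h1B
    omega

/-- For `r ≥ 3` and `n` sufficiently large: for every nonempty
`X ⊆ [2, n]` with `X ≠ {2}`, not (`|X| = 2` and `X ∩ {2,3} ≠ ∅`), not
(`|X| = 3` and `{2,3} ⊆ X`), and `X ⊄ [2, r+1]`, the star is the unique MLCIF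
optimal for `X`. -/
theorem stmt4 :
    ∀ r : ℕ, 3 ≤ r → ∃ N : ℕ, ∀ n : ℕ, N ≤ n →
      ∀ X : Finset ℕ, X ⊆ Finset.Icc 2 n → X.Nonempty → X ≠ {2} →
        ¬ (X.card = 2 ∧ (X ∩ {2, 3}).Nonempty) →
        ¬ (X.card = 3 ∧ ({2, 3} : Finset ℕ) ⊆ X) →
        ¬ X ⊆ Finset.Icc 2 (r + 1) →
        OptimalMLCIF n r X (starFam n r) ∧
        ∀ 𝒜 : Finset (Finset ℕ), OptimalMLCIF n r X 𝒜 → 𝒜 = starFam n r := by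
  intro r hr
  refine ⟨2 ^ (2 * r + 6) * (r + 1) ^ 4, fun n hn X hX _ _ hc2 hc3 hXr => ?_⟩
  have hlt {𝒜 : Finset (Finset ℕ)} (h𝒜 : IsMLCIF n r 𝒜) (hne : 𝒜 ≠ starFam n r) :=
    h𝒜.hit_lt_hit_starFam hne hr hn hX hc2 hc3 hXr
  have hstar : IsMLCIF n r (starFam n r) :=
    starFam_isMLCIF (by omega) (two_mul_le_of_two_pow_le (two_pow_le_of_two_pow_mul_le hn))
  refine ⟨⟨hstar, fun ℬ hℬ => ?_⟩, fun 𝒜 h𝒜 => ?_⟩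
  · rcases eq_or_ne ℬ (starFam n r) with rfl | hne
    · exact le_rfl
    · exact (hlt hℬ hne).le
  · by_contra hne
    exact (hlt h𝒜.1 hne).not_ge (h𝒜.2 _ hstar)
end

section
/- Let n ≥ 2r with r ≥ 1, let 𝒜 be an MLCIF on ([n] choose r), let 𝒢 be the canonical generating family of 𝒜, and let k be the rank of 𝒜. Then the subfamily 𝒢 ∩ ([n] choose k), i.e. the family of generators of 𝒜 of size k, is left-compressed (as a family of k-element subsets of [n]). -/
open Finset

/-!
Potential generators of a left-compressed family `𝒜` are closed under domination: if `G` is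
one and `b < a` with `a ∈ G`, `b ∉ G`, then any `r`-set `C` containing `G - a + b` but not `a`
is dominated by `C - b + a ⊇ G`, which lies in `𝒜`; and `B ≤ G` is reached from `G` by finitely
many such moves. Hence if `G` is a generator of minimal
size `k` and `B ≤ G`, then `B` is a potential generator, so it contains a generator, which has
size at least `k = |B|` and therefore is `B` itself.
-/

lemma sort_getElem_lt_iff (S : Finset ℕ) {i : ℕ} (hi : i < (S.sort (· ≤ ·)).length) (m : ℕ) :
    (S.sort (· ≤ ·))[i] < m ↔ i < #{x ∈ S | x < m} := by
  have hf : (Set.ofPred (· ∈ S)).Finite := S.finite_toSet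
  have hS : hf.toFinset = S := by ext; simp
  have hnth : (S.sort (· ≤ ·))[i] = Nat.nth (· ∈ S) i := by
    rw [Nat.nth_eq_getD_sort hf, hS, List.getD_eq_getElem]
  have hcount : #{x ∈ S | x < m} = Nat.count (· ∈ S) m := by
    rw [Nat.count_eq_card_filter_range]
    congr 1
    ext x
    simp [and_comm]
  rw [hnth, hcount]
  refine ⟨fun h => ?_, Nat.nth_lt_of_lt_count⟩
  rw [length_sort, ← hS] at hi
  calc i < Nat.count (· ∈ S) (Nat.nth (· ∈ S) i + 1) := by
        rw [Nat.count_nth_succ fun _ => hi]; omega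
    _ ≤ Nat.count (· ∈ S) m := Nat.count_monotone _ h

lemma domLE_iff {A B : Finset ℕ} :
    DomLE B A ↔ #B = #A ∧ ∀ m, #{x ∈ A | x < m} ≤ #{x ∈ B | x < m} := by
  refine and_congr_right fun hcard => ⟨fun h m => ?_, fun h i hB hA => ?_⟩
  · by_contra! hlt
    set i := #{x ∈ B | x < m}
    have hiA : i < (A.sort (· ≤ ·)).length := by
      rw [length_sort]; exact hlt.trans_le (card_filter_le _ _)
    have hiB : i < (B.sort (· ≤ ·)).length := by
      rwa [length_sort, hcard, ← length_sort (· ≤ ·)]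
    have hBi : (B.sort (· ≤ ·))[i] < m :=
      (h i hiB hiA).trans_lt ((sort_getElem_lt_iff A hiA m).2 hlt)
    exact lt_irrefl i ((sort_getElem_lt_iff B hiB m).1 hBi)
  · simp only [List.get_eq_getElem]
    have hA' := (sort_getElem_lt_iff A hA (_ + 1)).1 (lt_add_one _)
    exact Nat.lt_add_one_iff.1 ((sort_getElem_lt_iff B hB _).2 (hA'.trans_le (h _)))

lemma card_filter_lt_insert_erase {S : Finset ℕ} {a b m : ℕ} (ha : a ∈ S) (hb : b ∉ S)
    (ham : a < m) (hbm : b < m) :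
    #{x ∈ insert b (S.erase a) | x < m} = #{x ∈ S | x < m} := by
  rw [filter_insert, if_pos hbm, filter_erase, card_insert_of_notMem (by simp [hb]),
    card_erase_add_one (by simp [ha, ham])]

lemma domLE_insert_erase {S : Finset ℕ} {a b : ℕ} (ha : a ∈ S) (hb : b ∉ S) (hba : b ≤ a) :
    DomLE (insert b (S.erase a)) S := by
  refine domLE_iff.2 ⟨?_, fun m => ?_⟩
  · rw [card_insert_of_notMem (fun h => hb (mem_of_mem_erase h)), card_erase_add_one ha]
  rcases lt_or_ge a m with ham | hma
  · exact (card_filter_lt_insert_erase ha hb ham (by omega)).ge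
  · refine card_le_card fun x hx => ?_
    simp only [mem_filter, mem_insert, mem_erase] at hx ⊢
    exact ⟨Or.inr ⟨by omega, hx.1⟩, hx.2⟩

lemma exists_domLE_insert_erase {A B : Finset ℕ} (hBA : DomLE B A) (hne : B ≠ A) :
    ∃ a ∈ A, ∃ b ∈ B, b < a ∧ b ∉ A ∧ DomLE B (insert b (A.erase a)) := by
  obtain ⟨hcard, hcount⟩ := domLE_iff.1 hBA
  have hBdiff : (B \ A).Nonempty := by
    rw [nonempty_iff_ne_empty, Ne, sdiff_eq_empty_iff_subset]
    exact fun h => hne (eq_of_subset_of_card_le h hcard.ge)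
  have hAdiff : (A \ B).Nonempty := by
    rw [nonempty_iff_ne_empty, Ne, sdiff_eq_empty_iff_subset]
    exact fun h => hne (eq_of_subset_of_card_le h hcard.le).symm
  -- Moving the least element of `A \ B` to the least element of `B \ A` keeps `B` dominated,
  -- since below the former `A` is contained in `B`.
  set a := (A \ B).min' hAdiff
  set b := (B \ A).min' hBdiff
  obtain ⟨haA, haB⟩ : a ∈ A ∧ a ∉ B := mem_sdiff.1 (min'_mem _ hAdiff)
  obtain ⟨hbB, hbA⟩ : b ∈ B ∧ b ∉ A := mem_sdiff.1 (min'_mem _ hBdiff)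
  have hA_of_lt : ∀ x ∈ A, x < a → x ∈ B := fun x hx hxa =>
    by_contra fun hxB => (min'_le _ x (mem_sdiff.2 ⟨hx, hxB⟩)).not_gt hxa
  have hB_of_lt : ∀ x ∈ B, x < b → x ∈ A := fun x hx hxb =>
    by_contra fun hxA => (min'_le _ x (mem_sdiff.2 ⟨hx, hxA⟩)).not_gt hxb
  have hba : b < a := by
    by_contra! hab
    have hsub : {x ∈ B | x < a + 1} ⊂ {x ∈ A | x < a + 1} := by
      refine (ssubset_iff_of_subset fun x hx => ?_).2
        ⟨a, by simpa using haA, by simpa using haB⟩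
      simp only [mem_filter] at hx ⊢
      refine ⟨hB_of_lt x hx.1 (lt_of_le_of_ne (by omega) fun hxb => ?_), hx.2⟩
      exact haB ((show x = a by omega) ▸ hx.1)
    exact (card_lt_card hsub).not_ge (hcount _)
  refine ⟨a, haA, b, hbB, hba, hbA, domLE_iff.2 ⟨?_, fun m => ?_⟩⟩
  · rw [card_insert_of_notMem (fun h => hbA (mem_of_mem_erase h)), card_erase_add_one haA, hcard]
  rcases lt_or_ge a m with ham | hma
  · exact (card_filter_lt_insert_erase haA hbA ham (by omega)).trans_le (hcount m)
  rcases lt_or_ge b m with hbm | hmb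
  · refine card_le_card fun x hx => ?_
    simp only [mem_filter, mem_insert, mem_erase] at hx ⊢
    rcases hx with ⟨rfl | ⟨hxa, hxA⟩, hxm⟩
    · exact ⟨hbB, hxm⟩
    · exact ⟨hA_of_lt x hxA (by omega), hxm⟩
  · refine le_trans (card_le_card fun x hx => ?_) (hcount m)
    simp only [mem_filter, mem_insert, mem_erase] at hx ⊢
    rcases hx with ⟨rfl | ⟨-, hxA⟩, hxm⟩
    · omega
    · exact ⟨hxA, hxm⟩

section PotGen

variable {n r : ℕ} {𝒜 : Finset (Finset ℕ)}

lemma PotGen.insert_erase (h𝒜 : LeftCompressed n r 𝒜) {G : Finset ℕ} (hG : PotGen n r 𝒜 G)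
    {a b : ℕ} (ha : a ∈ G) (hb : b ∈ Icc 1 n) (hbG : b ∉ G) (hba : b ≤ a) :
    PotGen n r 𝒜 (insert b (G.erase a)) := by
  refine ⟨insert_subset hb ((erase_subset _ _).trans hG.1), fun C hC hGC => ?_⟩
  obtain ⟨hCn, hCr⟩ := mem_powersetCard.1 hC
  have hbC : b ∈ C := hGC (mem_insert_self _ _)
  have hG_erase : G.erase a ⊆ C := (subset_insert _ _).trans hGC
  by_cases haC : a ∈ C
  · exact hG.2 C hC fun x hx =>
      if hxa : x = a then hxa ▸ haC else hG_erase (mem_erase.2 ⟨hxa, hx⟩)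
  -- Moving `b` back to `a` turns `C` into a member of `𝒜` containing `G` and dominating `C`.
  have haC' : a ∉ C.erase b := fun h => haC (mem_of_mem_erase h)
  set C' := insert a (C.erase b)
  have hC' : C' ∈ chooseFam n r := mem_powersetCard.2
    ⟨insert_subset (hG.1 ha) ((erase_subset _ _).trans hCn),
      by rw [card_insert_of_notMem haC', card_erase_add_one hbC, hCr]⟩
  have hGC' : G ⊆ C' := fun x hx => by
    by_cases hxa : x = a
    · exact hxa ▸ mem_insert_self _ _
    · exact mem_insert_of_mem
        (mem_erase.2 ⟨fun hxb => hbG (hxb ▸ hx), hG_erase (mem_erase.2 ⟨hxa, hx⟩)⟩)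
  have hbC' : b ∉ C' := by
    simp only [C', mem_insert, mem_erase, ne_eq, not_true_eq_false, false_and, or_false]
    exact fun hab => hbG (hab ▸ ha)
  have hCC' : C = insert b (C'.erase a) := by rw [erase_insert haC', Finset.insert_erase hbC]
  refine h𝒜 C' (hG.2 C' hC' hGC') C hC ?_
  rw [hCC']
  exact domLE_insert_erase (mem_insert_self _ _) hbC' hba

lemma potGen_of_mem_canonGen {G : Finset ℕ} (hG : G ∈ canonGen n r 𝒜) : PotGen n r 𝒜 G := by
  simp only [canonGen, mem_filter] at hG
  exact hG.2.1

lemma PotGen.of_domLE (h𝒜 : LeftCompressed n r 𝒜) {G B : Finset ℕ} (hG : PotGen n r 𝒜 G)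
    (hB : B ⊆ Icc 1 n) (hBG : DomLE B G) : PotGen n r 𝒜 B := by
  induction hs : ∑ x ∈ G, x using Nat.strong_induction_on generalizing G with
  | _ s ih =>
  obtain rfl | hne := eq_or_ne B G
  · exact hG
  obtain ⟨a, ha, b, hbB, hba, hbG, hBG'⟩ := exists_domLE_insert_erase hBG hne
  refine ih _ ?_ (hG.insert_erase h𝒜 ha (hB hbB) hbG hba.le) hBG' rfl
  rw [← hs, sum_insert (fun h => hbG (mem_of_mem_erase h)), ← add_sum_erase G _ ha]
  omega

lemma PotGen.exists_mem_canonGen_subset {G : Finset ℕ} (hG : PotGen n r 𝒜 G) :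
    ∃ H ∈ canonGen n r 𝒜, H ⊆ G := by
  classical
  obtain ⟨H, hH, hmin⟩ :=
    exists_min_image (G.powerset.filter (PotGen n r 𝒜)) card ⟨G, by simp [hG]⟩
  simp only [mem_filter, mem_powerset] at hH
  refine ⟨H, ?_, hH.1⟩
  simp only [canonGen, mem_filter, mem_powerset]
  exact ⟨hH.2.1, hH.2, fun G' hG'H hG' =>
    eq_of_subset_of_card_le hG'H (hmin G' (by simp [hG'H.trans hH.1, hG']))⟩

end PotGen

theorem stmt10_general (n r : ℕ) (𝒜 : Finset (Finset ℕ))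
    (hA : IsMLCIF n r 𝒜) :
    LeftCompressed n (rankFam n r 𝒜)
      ((canonGen n r 𝒜).filter fun G => G.card = rankFam n r 𝒜) := by
  intro G hG B hB hBG
  obtain ⟨hGgen, -⟩ := mem_filter.1 hG
  obtain ⟨hBn, hBk⟩ := mem_powersetCard.1 hB
  have hBpot : PotGen n r 𝒜 B := PotGen.of_domLE hA.1.2.2 (potGen_of_mem_canonGen hGgen) hBn hBG
  obtain ⟨H, hH, hHsub⟩ := hBpot.exists_mem_canonGen_subset
  have hHB : H = B := eq_of_subset_of_card_le hHsub (hBk.le.trans (Nat.sInf_le ⟨H, hH, rfl⟩))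
  exact mem_filter.2 ⟨hHB ▸ hH, hBk⟩

/-- For `n ≥ 2r`, `r ≥ 1`, an MLCIF `𝒜` with canonical
generating family `𝒢` and rank `k`, the family of generators of size `k` is
left-compressed (as a family of `k`-element subsets of `[n]`). -/
theorem stmt10 (n r : ℕ) (hr : 1 ≤ r) (hn : 2 * r ≤ n) (𝒜 : Finset (Finset ℕ))
    (hA : IsMLCIF n r 𝒜) :
    LeftCompressed n (rankFam n r 𝒜)
      ((canonGen n r 𝒜).filter fun G => G.card = rankFam n r 𝒜) :=
  stmt10_general n r 𝒜 hA
end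

section
/- For all integers n, r, t with n ≥ 2r and 3 ≤ t ≤ r+1, the t-adjusted Hilton–Milner family AHM_t is an MLCIF on ([n] choose r); that is, AHM_t is a left-compressed intersecting family which is maximal under inclusion among left-compressed intersecting families in ([n] choose r). -/
open Finset

/-!
Write `c_m(A) = #{a ∈ A | a ≤ m}`; shifting `A` down to `B ≤ A` can only increase every
`c_m`. For `r`-subsets of `[n]`, the first condition defining `AHM_t` says `c_1 ≥ 1` and
`c_t ≥ 2`, while `[2,t] ⊆ A` gives `c_t ≥ t - 1 ≥ 2`, and conversely `c_t ≥ t - 1` forces one of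
the two conditions. Hence `AHM_t` is left-compressed.

For maximality, every `r`-set `B ∉ AHM_t` is disjoint from some member of `AHM_t` once
`n ≥ 2r`: if `1 ∈ B` then `B` misses `[2,t]`, and if `1 ∉ B` then `B` misses some `s ∈ [2,t]`;
extend `[2,t]`, resp. `{1, s}`, to an `r`-set inside the complement of `B`.
-/

lemma DomLE.orderEmbOfFin_le {A B : Finset ℕ} (h : DomLE B A) (i : Fin #A) :
    B.orderEmbOfFin h.1 i ≤ A.orderEmbOfFin rfl i := by
  simpa [orderEmbOfFin_apply] using h.2 i (by simp [h.1]) (by simp)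

lemma card_filter_eq_card_filter_orderEmbOfFin {S : Finset ℕ} {k : ℕ} (hS : #S = k)
    (p : ℕ → Prop) [DecidablePred p] :
    #(S.filter p) = #(univ.filter fun i => p (S.orderEmbOfFin hS i)) := by
  conv_lhs => rw [← image_orderEmbOfFin_univ S hS, filter_image]
  exact card_image_of_injective _ (S.orderEmbOfFin hS).injective

lemma DomLE.card_filter_le {A B : Finset ℕ} (h : DomLE B A) (m : ℕ) :
    #(A.filter (· ≤ m)) ≤ #(B.filter (· ≤ m)) := by
  rw [card_filter_eq_card_filter_orderEmbOfFin rfl, card_filter_eq_card_filter_orderEmbOfFin h.1]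
  exact card_le_card fun i hi => by
    simp only [mem_filter, mem_univ, true_and] at hi ⊢
    exact (h.orderEmbOfFin_le i).trans hi

section CountingBelow

variable {S : Finset ℕ} {t : ℕ}

lemma one_mem_iff_pos_card_filter_le_one (hS : 0 ∉ S) :
    1 ∈ S ↔ 0 < #(S.filter (· ≤ 1)) := by
  rw [card_pos]
  refine ⟨fun h1 => ⟨1, mem_filter.mpr ⟨h1, le_rfl⟩⟩, fun ⟨x, hx⟩ => ?_⟩
  obtain ⟨hxS, hx1⟩ := mem_filter.mp hx
  obtain rfl : x = 1 := by
    rcases Nat.le_one_iff_eq_zero_or_eq_one.mp hx1 with rfl | rfl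
    exacts [absurd hxS hS, rfl]
  exact hxS

lemma two_le_card_filter_le_of_one_mem (h1 : 1 ∈ S) (h : (S ∩ Icc 2 t).Nonempty) :
    2 ≤ #(S.filter (· ≤ t)) := by
  obtain ⟨a, ha⟩ := h
  simp only [mem_inter, mem_Icc] at ha
  calc 2 = #({1, a} : Finset ℕ) := (card_pair (by omega)).symm
    _ ≤ _ := card_le_card <| insert_subset (mem_filter.mpr ⟨h1, by omega⟩) <|
        singleton_subset_iff.mpr (mem_filter.mpr ⟨ha.1, ha.2.2⟩)

lemma card_filter_le_of_Icc_subset (h : Icc 2 t ⊆ S) : t - 1 ≤ #(S.filter (· ≤ t)) := by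
  calc t - 1 = #(Icc 2 t) := by simp
    _ ≤ _ := card_le_card fun x hx => mem_filter.mpr ⟨h hx, (mem_Icc.mp hx).2⟩

lemma inter_Icc_nonempty_of_two_le_card_filter_le (hS : 0 ∉ S)
    (h : 2 ≤ #(S.filter (· ≤ t))) : (S ∩ Icc 2 t).Nonempty := by
  by_contra hempty
  have hsub : S.filter (· ≤ t) ⊆ {1} := fun x hx => by
    obtain ⟨hxS, hxt⟩ := mem_filter.mp hx
    have hx0 : x ≠ 0 := fun h0 => hS (h0 ▸ hxS)
    rw [mem_singleton]
    by_contra hx1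
    exact hempty ⟨x, mem_inter.mpr ⟨hxS, mem_Icc.mpr ⟨by omega, hxt⟩⟩⟩
  have := (card_le_card hsub).trans_eq (card_singleton 1)
  omega

lemma Icc_subset_of_card_filter_le (hS : 0 ∉ S) (h1 : 1 ∉ S)
    (h : t - 1 ≤ #(S.filter (· ≤ t))) : Icc 2 t ⊆ S := by
  have hsub : S.filter (· ≤ t) ⊆ Icc 2 t := fun x hx => by
    obtain ⟨hxS, hxt⟩ := mem_filter.mp hx
    have hx0 : x ≠ 0 := fun h0 => hS (h0 ▸ hxS)
    have hx1 : x ≠ 1 := fun h1' => h1 (h1' ▸ hxS)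
    exact mem_Icc.mpr ⟨by omega, hxt⟩
  rw [← eq_of_subset_of_card_le hsub (by simpa using h)]
  exact filter_subset _ _

end CountingBelow

section AHM

variable {n r t : ℕ}

lemma mem_AHM {A : Finset ℕ} :
    A ∈ AHM n r t ↔ A ∈ chooseFam n r ∧
      ((1 ∈ A ∧ (A ∩ Icc 2 t).Nonempty) ∨ Icc 2 t ⊆ A) := mem_filter

lemma AHM_intersecting (ht : 2 ≤ t) : IntersectingFam (AHM n r t) := by
  intro A hA B hB
  rcases (mem_AHM.mp hA).2 with ⟨h1A, a, ha⟩ | hA2 <;>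
    rcases (mem_AHM.mp hB).2 with ⟨h1B, b, hb⟩ | hB2
  · exact ⟨1, mem_inter.mpr ⟨h1A, h1B⟩⟩
  · exact ⟨a, mem_inter.mpr ⟨(mem_inter.mp ha).1, hB2 (mem_inter.mp ha).2⟩⟩
  · exact ⟨b, mem_inter.mpr ⟨hA2 (mem_inter.mp hb).2, (mem_inter.mp hb).1⟩⟩
  · have h2 : 2 ∈ Icc 2 t := mem_Icc.mpr ⟨le_rfl, ht⟩
    exact ⟨2, mem_inter.mpr ⟨hA2 h2, hB2 h2⟩⟩

lemma AHM_leftCompressed (ht : 3 ≤ t) : LeftCompressed n r (AHM n r t) := by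
  intro A hA B hB hBA
  have hA0 := zero_notMem_of_mem_chooseFam (mem_AHM.mp hA).1
  have hB0 := zero_notMem_of_mem_chooseFam hB
  refine mem_AHM.mpr ⟨hB, ?_⟩
  rcases (mem_AHM.mp hA).2 with ⟨h1A, hA2⟩ | hA2
  · have h1B : 1 ∈ B := (one_mem_iff_pos_card_filter_le_one hB0).mpr <|
      ((one_mem_iff_pos_card_filter_le_one hA0).mp h1A).trans_le (hBA.card_filter_le 1)
    exact Or.inl ⟨h1B, inter_Icc_nonempty_of_two_le_card_filter_le hB0 <|
      (two_le_card_filter_le_of_one_mem h1A hA2).trans (hBA.card_filter_le t)⟩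
  · have hBt : t - 1 ≤ #(B.filter (· ≤ t)) :=
      (card_filter_le_of_Icc_subset hA2).trans (hBA.card_filter_le t)
    by_cases h1B : 1 ∈ B
    · exact Or.inl ⟨h1B, inter_Icc_nonempty_of_two_le_card_filter_le hB0 (by omega)⟩
    · exact Or.inr (Icc_subset_of_card_filter_le hB0 h1B hBt)

end AHM

lemma exists_mem_chooseFam_superset_disjoint {n r : ℕ} (hn : 2 * r ≤ n) {B S : Finset ℕ}
    (hB : B ∈ chooseFam n r) (hS : S ⊆ Icc 1 n \ B) (hSr : #S ≤ r) :
    ∃ C ∈ chooseFam n r, S ⊆ C ∧ Disjoint B C := by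
  obtain ⟨hBn, hBr⟩ := mem_powersetCard.mp hB
  have hcompl : r ≤ #(Icc 1 n \ B) := by
    rw [card_sdiff_of_subset hBn, Nat.card_Icc]
    omega
  obtain ⟨C, hSC, hC, hCr⟩ := exists_subsuperset_card_eq hS hSr hcompl
  exact ⟨C, mem_powersetCard.mpr ⟨hC.trans sdiff_subset, hCr⟩, hSC,
    disjoint_left.mpr fun x hxB hxC => (mem_sdiff.mp (hC hxC)).2 hxB⟩

lemma IntersectingFam.eq_of_subset {n r : ℕ} {𝒜 ℬ : Finset (Finset ℕ)}
    (hℬ : IntersectingFam ℬ) (hℬn : ℬ ⊆ chooseFam n r) (h𝒜ℬ : 𝒜 ⊆ ℬ)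
    (h𝒜 : ∀ B ∈ chooseFam n r, B ∉ 𝒜 → ∃ C ∈ 𝒜, Disjoint B C) : ℬ = 𝒜 := by
  refine Subset.antisymm (fun B hB => ?_) h𝒜ℬ
  by_contra hB𝒜
  obtain ⟨C, hC, hBC⟩ := h𝒜 B (hℬn hB) hB𝒜
  exact not_nonempty_iff_eq_empty.mpr (disjoint_iff_inter_eq_empty.mp hBC) (hℬ B hB C (h𝒜ℬ hC))

lemma AHM_exists_disjoint {n r t : ℕ} (hn : 2 * r ≤ n) (ht : 3 ≤ t) (htr : t ≤ r + 1)
    {B : Finset ℕ} (hB : B ∈ chooseFam n r) (hBA : B ∉ AHM n r t) :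
    ∃ C ∈ AHM n r t, Disjoint B C := by
  simp only [mem_AHM, hB, true_and, not_or, not_and, not_nonempty_iff_eq_empty,
    not_subset] at hBA
  obtain ⟨hB1, hBt⟩ := hBA
  by_cases h1B : 1 ∈ B
  · have hsub : Icc 2 t ⊆ Icc 1 n \ B := fun x hx => by
      have hx := mem_Icc.mp hx
      refine mem_sdiff.mpr ⟨mem_Icc.mpr ⟨by omega, by omega⟩, fun hxB => ?_⟩
      simpa [hB1 h1B] using mem_inter.mpr ⟨hxB, mem_Icc.mpr hx⟩
    obtain ⟨C, hC, hIC, hBC⟩ :=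
      exists_mem_chooseFam_superset_disjoint hn hB hsub (by rw [Nat.card_Icc]; omega)
    exact ⟨C, mem_AHM.mpr ⟨hC, Or.inr hIC⟩, hBC⟩
  · obtain ⟨s, hs, hsB⟩ := hBt
    have hs' := mem_Icc.mp hs
    have hsub : {1, s} ⊆ Icc 1 n \ B := insert_subset
      (mem_sdiff.mpr ⟨mem_Icc.mpr ⟨le_rfl, by omega⟩, h1B⟩)
      (singleton_subset_iff.mpr (mem_sdiff.mpr ⟨mem_Icc.mpr ⟨by omega, by omega⟩, hsB⟩))
    obtain ⟨C, hC, h1sC, hBC⟩ :=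
      exists_mem_chooseFam_superset_disjoint hn hB hsub (card_le_two.trans (by omega))
    refine ⟨C, mem_AHM.mpr ⟨hC, Or.inl ⟨h1sC (mem_insert_self 1 {s}), s, ?_⟩⟩, hBC⟩
    exact mem_inter.mpr ⟨h1sC (mem_insert_of_mem (mem_singleton_self s)), hs⟩

/-- For `n ≥ 2r` and `3 ≤ t ≤ r + 1`, the `t`-adjusted
Hilton–Milner family `AHM_t` is an MLCIF on `([n] choose r)`. -/
theorem stmt11 (n r t : ℕ) (hn : 2 * r ≤ n) (ht : 3 ≤ t) (htr : t ≤ r + 1) :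
    IsMLCIF n r (AHM n r t) :=
  ⟨⟨filter_subset _ _, AHM_intersecting (by omega), AHM_leftCompressed ht⟩,
    fun _ hℬ h𝒜ℬ => hℬ.2.1.eq_of_subset hℬ.1 h𝒜ℬ fun _ hB hBA =>
      AHM_exists_disjoint hn ht htr hB hBA⟩
end
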